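/- arXiv:2010.00429 — 5 statements merged into one kernel-verified Lean document; each statement's English description precedes it below -/
import Mathlib

section
/- Let G be a finite simple bipartite graph with maximum degree Δ, where Δ ≥ 2. Then the injective chromatic index of G satisfies χ'_inj(G) ≤ ⌈27 Δ ln Δ⌉. -/
open SimpleGraph

/-- Two distinct edges of `G` *conflict* if they are at distance exactly 1 in `G`
(they share no endpoint but some endpoint of one is adjacent to some endpoint of the
other), or they lie in a common triangle of `G`. -/
def EdgeConflict {V : Type*} (G : SimpleGraph V) (e₁ e₂ : Sym2 V) : Prop :=
  e₁ ≠ e₂ ∧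
    (((∀ u ∈ e₁, u ∉ e₂) ∧ ∃ u ∈ e₁, ∃ v ∈ e₂, G.Adj u v) ∨
      (∃ a b c : V, G.Adj a b ∧ G.Adj b c ∧ G.Adj a c ∧
        e₁ ∈ ({s(a, b), s(b, c), s(a, c)} : Set (Sym2 V)) ∧
        e₂ ∈ ({s(a, b), s(b, c), s(a, c)} : Set (Sym2 V))))

/-- An injective edge-coloring of `G` with `k` colors. -/
def IsInjEdgeColoring {V : Type*} (G : SimpleGraph V) {k : ℕ} (f : Sym2 V → Fin k) : Prop :=
  ∀ e₁ ∈ G.edgeSet, ∀ e₂ ∈ G.edgeSet, EdgeConflict G e₁ e₂ → f e₁ ≠ f e₂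

/-- The injective chromatic index of `G`. -/
noncomputable def injChromIndex {V : Type*} (G : SimpleGraph V) : ℕ :=
  sInf {k : ℕ | ∃ f : Sym2 V → Fin k, IsInjEdgeColoring G f}


/-- `G` is bipartite: its vertices split into two sides such that every edge joins
the two sides. -/
def IsBipartiteGraph {V : Type*} (G : SimpleGraph V) : Prop :=
  ∃ A : Set V, ∀ ⦃u v : V⦄, G.Adj u v → (u ∈ A ↔ v ∉ A)

/-!
Give every vertex `x` a palette `g x : κ → α`, and call `x` marked at `γ` when `g x γ = a`.
Orient each edge as `uw` with `u` on a fixed side of the bipartition and colour it with a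
private mark of `u` at `w`: a `γ` at which `u` is the only marked neighbour of `w`. This is
injective: two conflicting edges `u₁w₁`, `u₂w₂` are disjoint and joined by an edge, say
`u₁ ~ w₂`, and then `u₁ ≠ u₂` is a neighbour of `w₂` marked at any common colour.

Palettes giving every edge a private mark are found by counting instead of the Local Lemma.
Let `Q X` be the palettes supported on `X` that give a private mark to every edge `uw` with
`N(w) ⊆ X`. Adding a vertex `v ∉ X` multiplies the number of palettes by `|α| ^ |κ|` and
creates at most `Δ²` new constraints `(u, w)`. The extensions violating one of them are
determined by a non-private pattern on `N(w)` at each colour and a palette in `Q (X \ N(w))`,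
and inductively `β ^ (d - 1) |Q (X \ N(w))| ≤ |Q X|`. Hence `β |Q X| ≤ |Q (X ∪ {v})|` with
`β = (1 - 1/(2Δ)) Δ ^ C`, and `Q V` is non-empty. For `|α| = Δ` a pattern on `N(w)` is
private with probability `(1/Δ) (1 - 1/Δ) ^ (d - 1) ≥ 1/(eΔ)`, and `C ≥ 27 Δ ln Δ` gives
`(1 - 1/(eΔ)) ^ C ≤ Δ ^ (-9)`, which is small enough.
-/

open Finset Real

theorem Finset.pow_card_sdiff_mul_le {V : Type*} [DecidableEq V] {f : Finset V → ℝ} {β : ℝ}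
    (hβ : 0 ≤ β) {X Y : Finset V} (hYX : Y ⊆ X)
    (h : ∀ Z ⊂ X, ∀ v ∈ X, v ∉ Z → β * f Z ≤ f (insert v Z)) :
    β ^ (X \ Y).card * f Y ≤ f X := by
  suffices key : ∀ S ⊆ X \ Y, β ^ S.card * f Y ≤ f (S ∪ Y) by
    simpa [sdiff_union_of_subset hYX] using key _ subset_rfl
  intro S
  induction S using Finset.induction_on with
  | empty => simp
  | insert b S hbS ih =>
    intro hS
    obtain ⟨hbX, hbY⟩ := mem_sdiff.1 (hS (mem_insert_self b S))
    have hbSY : b ∉ S ∪ Y := by simp [hbS, hbY]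
    have hSY : S ∪ Y ⊂ X := by
      refine (ssubset_iff_of_subset (union_subset (fun x hx => ?_) hYX)).2 ⟨b, hbX, hbSY⟩
      exact (mem_sdiff.1 (hS (mem_insert_of_mem hx))).1
    calc β ^ (insert b S).card * f Y = β * (β ^ S.card * f Y) := by
          rw [card_insert_of_notMem hbS, pow_succ]; ring
      _ ≤ β * f (S ∪ Y) := by gcongr; exact ih ((subset_insert b S).trans hS)
      _ ≤ f (insert b (S ∪ Y)) := h _ hSY b hbX hbSY
      _ = f (insert b S ∪ Y) := by rw [insert_union]

namespace Real

lemma pow_le_exp_one_mul_sub_one_pow {x : ℝ} (hx : 1 < x) {n : ℕ} (hn : (n : ℝ) ≤ x - 1) :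
    x ^ n ≤ exp 1 * (x - 1) ^ n := by
  have hx1 : 0 < x - 1 := sub_pos.2 hx
  have hbase : x = (x - 1) * (1 / (x - 1) + 1) := by field_simp; ring
  calc x ^ n = (1 / (x - 1) + 1) ^ n * (x - 1) ^ n := by
        rw [← mul_pow, mul_comm]; exact congrArg (· ^ n) hbase
    _ ≤ exp (1 / (x - 1)) ^ n * (x - 1) ^ n := by
        gcongr
        exact add_one_le_exp _
    _ = exp (n / (x - 1)) * (x - 1) ^ n := by
        rw [← exp_nat_mul, mul_one_div]
    _ ≤ exp 1 * (x - 1) ^ n := by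
        gcongr
        rwa [div_le_one hx1]

lemma half_le_one_sub_inv_two_mul_pow {x : ℝ} (hx : 1 ≤ x) {n : ℕ} (hn : (n : ℝ) ≤ x) :
    1 / 2 ≤ (1 - 1 / (2 * x)) ^ n := by
  have hx0 : 0 < x := by linarith
  have hinv : 1 / (2 * x) ≤ 1 / 2 := by gcongr; linarith
  have hn' : (n : ℝ) / (2 * x) ≤ 1 / 2 := by rw [div_le_iff₀ (by positivity)]; linarith
  calc (1 : ℝ) / 2 ≤ 1 + n * -(1 / (2 * x)) := by
        rw [mul_neg, mul_one_div]; linarith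
    _ ≤ (1 + -(1 / (2 * x))) ^ n := one_add_mul_le_pow (by linarith) n
    _ = (1 - 1 / (2 * x)) ^ n := by rw [← sub_eq_add_neg]

lemma one_sub_pow_le_exp_neg_mul {t : ℝ} (ht : t ≤ 1) (C : ℕ) : (1 - t) ^ C ≤ exp (-(C * t)) := by
  calc (1 - t) ^ C ≤ exp (-t) ^ C := by
        gcongr
        exact one_sub_le_exp_neg t
    _ = exp (-(C * t)) := by rw [← exp_nat_mul, mul_neg]

lemma one_sub_inv_exp_mul_pow_mul_le_one {x : ℝ} (hx : 2 ≤ x) {C : ℕ}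
    (hC : 27 * x * log x ≤ C) : (1 - 1 / (exp 1 * x)) ^ C * (4 * x ^ 3) ≤ 1 := by
  have hx0 : 0 < x := by linarith
  have hlog : 0 ≤ log x := log_nonneg (by linarith)
  have ht : 1 / (exp 1 * x) ≤ 1 := by
    rw [div_le_one (by positivity)]
    nlinarith [add_one_le_exp (1 : ℝ)]
  have h9 : 9 * log x ≤ C * (1 / (exp 1 * x)) := by
    rw [mul_one_div, le_div_iff₀ (by positivity)]
    nlinarith [exp_one_lt_three, mul_nonneg hlog hx0.le]
  have hx9 : exp (9 * log x) = x ^ 9 := by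
    rw [show (9 : ℝ) = (9 : ℕ) by norm_num, exp_nat_mul, exp_log hx0]
  calc (1 - 1 / (exp 1 * x)) ^ C * (4 * x ^ 3)
      ≤ exp (-(9 * log x)) * (4 * x ^ 3) := by
        gcongr
        exact (one_sub_pow_le_exp_neg_mul ht C).trans (exp_le_exp.2 (neg_le_neg h9))
    _ = 4 * x ^ 3 / x ^ 9 := by rw [exp_neg, hx9]; ring
    _ ≤ 1 := by
        rw [div_le_one (by positivity)]
        nlinarith [pow_le_pow_left₀ (by norm_num) hx 6, pow_pos hx0 3]

lemma pow_sub_sub_one_pow_pow_le {x : ℝ} (hx : 2 ≤ x) {d C : ℕ} (hd : 1 ≤ d) (hdx : (d : ℝ) ≤ x)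
    (hC : 27 * x * log x ≤ C) :
    (x ^ d - (x - 1) ^ (d - 1)) ^ C ≤
      x ^ C / (2 * x ^ 3) * ((1 - 1 / (2 * x)) * x ^ C) ^ (d - 1) := by
  obtain ⟨n, rfl⟩ : ∃ n, d = n + 1 := ⟨d - 1, by omega⟩
  rw [Nat.add_sub_cancel]
  push_cast at hdx
  have hx0 : 0 < x := by linarith
  have hm : x ^ (n + 1) - (x - 1) ^ n ≤ (1 - 1 / (exp 1 * x)) * x ^ (n + 1) := by
    have hexp := pow_le_exp_one_mul_sub_one_pow (x := x) (by linarith) (n := n) (by linarith)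
    have hrhs : (1 - 1 / (exp 1 * x)) * x ^ (n + 1) = x ^ (n + 1) - x ^ n / exp 1 := by
      field_simp; ring
    rw [hrhs, sub_le_sub_iff_left, div_le_iff₀ (exp_pos 1)]
    linarith
  have hm0 : 0 ≤ x ^ (n + 1) - (x - 1) ^ n := by
    have : (x - 1) ^ n ≤ x ^ n := by gcongr <;> linarith
    have : x ^ n ≤ x ^ (n + 1) := pow_le_pow_right₀ (by linarith) n.le_succ
    linarith
  calc (x ^ (n + 1) - (x - 1) ^ n) ^ C
      ≤ ((1 - 1 / (exp 1 * x)) * x ^ (n + 1)) ^ C := by gcongr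
    _ = (1 - 1 / (exp 1 * x)) ^ C * (4 * x ^ 3) * (x ^ C * (x ^ C) ^ n / (4 * x ^ 3)) := by
        rw [mul_pow, ← pow_mul, ← pow_mul, ← pow_add]
        field_simp
        ring_nf
    _ ≤ 1 * (x ^ C * (x ^ C) ^ n / (4 * x ^ 3)) := by
        gcongr; exact one_sub_inv_exp_mul_pow_mul_le_one hx hC
    _ = x ^ C / (2 * x ^ 3) * (1 / 2 * (x ^ C) ^ n) := by ring
    _ ≤ x ^ C / (2 * x ^ 3) * ((1 - 1 / (2 * x)) ^ n * (x ^ C) ^ n) := by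
        gcongr; exact half_le_one_sub_inv_two_mul_pow (by linarith) (by linarith)
    _ = x ^ C / (2 * x ^ 3) * ((1 - 1 / (2 * x)) * x ^ C) ^ n := by rw [mul_pow]

end Real

namespace SimpleGraph

variable {V κ α : Type*} (G : SimpleGraph V) (a : α)

def IsPrivateMark (g : V → κ → α) (u w : V) (γ : κ) : Prop :=
  ∀ x ∈ G.neighborSet w, g x γ = a ↔ x = u

def HasPrivateMark (g : V → κ → α) (u w : V) : Prop :=
  ∃ γ, G.IsPrivateMark a g u w γ

variable {G a}

lemma IsPrivateMark.eq_of_adj {g : V → κ → α} {u u' w w' : V} {γ : κ}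
    (h : G.IsPrivateMark a g u w γ) (h' : G.IsPrivateMark a g u' w' γ) (hu : G.Adj u w)
    (hu' : G.Adj u w') : u = u' :=
  (h' u hu'.symm).1 ((h u hu.symm).2 rfl)

lemma hasPrivateMark_congr {g g' : V → κ → α} {u w : V} (h : ∀ x, G.Adj w x → g x = g' x) :
    G.HasPrivateMark a g u w ↔ G.HasPrivateMark a g' u w := by
  refine exists_congr fun γ => forall₂_congr fun x hx => ?_
  rw [h x hx]

variable (G a) [Fintype V] [DecidableRel G.Adj]

def IsGoodOn (X : Finset V) (g : V → κ → α) : Prop :=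
  ∀ ⦃u w⦄, G.Adj u w → G.neighborFinset w ⊆ X → G.HasPrivateMark a g u w

variable {G a}

lemma isGoodOn_congr {X : Finset V} {g g' : V → κ → α} (h : ∀ x ∈ X, g x = g' x) :
    G.IsGoodOn a X g ↔ G.IsGoodOn a X g' := by
  refine forall₂_congr fun u w => imp_congr_right fun _ => imp_congr_right fun hX => ?_
  exact hasPrivateMark_congr fun x hx => h x (hX (by simpa using hx))

lemma isGoodOn_empty (g : V → κ → α) : G.IsGoodOn a ∅ g := by
  intro u w huw hw
  simpa using hw (by simpa using huw.symm : u ∈ G.neighborFinset w)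

variable (G a) [Fintype α]

open Classical in
noncomputable def privatePatterns (u w : V) : Finset (G.neighborSet w → α) :=
  {p | ∀ x, p x = a ↔ x.1 = u}

variable {G a}

lemma isPrivateMark_iff_mem_privatePatterns {g : V → κ → α} {u w : V} {γ : κ} :
    G.IsPrivateMark a g u w γ ↔ (fun x : G.neighborSet w => g x γ) ∈ G.privatePatterns a u w := by
  simp [IsPrivateMark, privatePatterns]

lemma card_privatePatterns {u w : V} (huw : G.Adj u w) :
    (G.privatePatterns a u w).card = (Fintype.card α - 1) ^ (G.degree w - 1) := by
  classical
  have hpi : G.privatePatterns a u w =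
      Fintype.piFinset fun x : G.neighborSet w => if x.1 = u then {a} else {a}ᶜ := by
    ext p
    simp only [privatePatterns, mem_filter, mem_univ, true_and, Fintype.mem_piFinset]
    refine forall_congr' fun x => ?_
    split_ifs with hx <;> simp [hx]
  let u' : G.neighborSet w := ⟨u, huw.symm⟩
  rw [hpi, Fintype.card_piFinset]
  calc ∏ x : G.neighborSet w, (if x.1 = u then ({a} : Finset α) else {a}ᶜ).card
      = ∏ x : G.neighborSet w, if x = u' then 1 else Fintype.card α - 1 := by
        refine prod_congr rfl fun x _ => ?_
        simp [u', Subtype.ext_iff, apply_ite Finset.card, card_compl]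
    _ = (Fintype.card α - 1) ^ (G.degree w - 1) := by
        rw [prod_ite, prod_const_one, one_mul, prod_const, filter_ne',
          card_erase_of_mem (mem_univ _), card_univ, card_neighborSet_eq_degree]

variable (G κ a) [Fintype κ]

open Classical in
/-- `Q X` of the proof sketch is `goodPalettes κ a X X`; the extensions of its palettes to a new
vertex `v` form `goodPalettes κ a (insert v X) X`. -/
noncomputable def goodPalettes (S X : Finset V) : Finset (V → κ → α) :=
  {g | (∀ x ∉ S, g x = fun _ => a) ∧ G.IsGoodOn a X g}

variable {G κ a}

@[simp]
lemma mem_goodPalettes {S X : Finset V} {g : V → κ → α} :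
    g ∈ G.goodPalettes κ a S X ↔ (∀ x ∉ S, g x = fun _ => a) ∧ G.IsGoodOn a X g := by
  simp [goodPalettes]

section

variable [DecidableEq V]

lemma card_goodPalettes_insert {S X : Finset V} {v : V} (hvS : v ∉ S) (hvX : v ∉ X) :
    (G.goodPalettes κ a (insert v S) X).card =
      Fintype.card α ^ Fintype.card κ * (G.goodPalettes κ a S X).card := by
  classical
  have hagree (g : V → κ → α) (p : κ → α) : ∀ x ∈ X, Function.update g v p x = g x :=
    fun x hx => Function.update_of_ne (ne_of_mem_of_not_mem hx hvX) _ _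
  rw [← Fintype.card_fun (α := κ) (β := α), ← card_univ, ← card_product]
  refine card_nbij' (fun g => (g v, Function.update g v fun _ => a))
    (fun p => Function.update p.2 v p.1) ?_ ?_ ?_ ?_
  · intro g hg
    simp only [coe_product, coe_univ, Set.mem_prod, Set.mem_univ, mem_coe, mem_goodPalettes,
      true_and] at hg ⊢
    refine ⟨fun x hx => ?_, (isGoodOn_congr (hagree g _)).2 hg.2⟩
    rcases eq_or_ne x v with rfl | hxv
    · simp
    · rw [Function.update_of_ne hxv]
      exact hg.1 x (by simp [hx, hxv])
  · rintro ⟨p, g⟩ hg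
    simp only [coe_product, coe_univ, Set.mem_prod, Set.mem_univ, mem_coe, mem_goodPalettes,
      true_and] at hg ⊢
    refine ⟨fun x hx => ?_, (isGoodOn_congr (hagree g _)).2 hg.2⟩
    rw [mem_insert, not_or] at hx
    rw [Function.update_of_ne hx.1]
    exact hg.1 x hx.2
  · intro g hg
    simp
  · rintro ⟨p, g⟩ hg
    simp only [coe_product, coe_univ, Set.mem_prod, Set.mem_univ, mem_coe, mem_goodPalettes,
      true_and] at hg
    simp [← hg.1 v hvS]

open Classical in
lemma goodPalettes_subset_union_biUnion {S X : Finset V} {v : V} :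
    G.goodPalettes κ a S X ⊆ G.goodPalettes κ a S (insert v X) ∪
      ((G.neighborFinset v).filter fun w => G.neighborFinset w ⊆ insert v X).biUnion fun w =>
        (G.neighborFinset w).biUnion fun u =>
          (G.goodPalettes κ a S X).filter fun g => ¬ G.HasPrivateMark a g u w := by
  intro g hg
  obtain ⟨hS, hX⟩ := mem_goodPalettes.1 hg
  by_cases hgood : G.IsGoodOn a (insert v X) g
  · exact mem_union_left _ (mem_goodPalettes.2 ⟨hS, hgood⟩)
  refine mem_union_right _ ?_
  simp only [IsGoodOn, not_forall] at hgood
  obtain ⟨u, w, huw, hw, hbad⟩ := hgood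
  have hvw : G.Adj v w := by
    by_contra hvw
    refine hbad (hX huw fun x hx => (mem_insert.1 (hw hx)).resolve_left ?_)
    rintro rfl
    exact hvw ((mem_neighborFinset _ _ _).1 hx).symm
  simp only [mem_biUnion, mem_filter, mem_neighborFinset]
  exact ⟨w, ⟨hvw, hw⟩, u, huw.symm, hg, hbad⟩

open Classical in
lemma card_goodPalettes_le_add_sum {S X : Finset V} {v : V} :
    (G.goodPalettes κ a S X).card ≤ (G.goodPalettes κ a S (insert v X)).card +
      ∑ w ∈ (G.neighborFinset v).filter (fun w => G.neighborFinset w ⊆ insert v X),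
        ∑ u ∈ G.neighborFinset w,
          ((G.goodPalettes κ a S X).filter fun g => ¬ G.HasPrivateMark a g u w).card :=
  calc _ ≤ _ := card_le_card goodPalettes_subset_union_biUnion
    _ ≤ _ := card_union_le _ _
    _ ≤ _ := by gcongr; exact card_biUnion_le.trans (sum_le_sum fun w _ => card_biUnion_le)

variable [DecidableEq α]

lemma card_compl_privatePatterns {u w : V} (huw : G.Adj u w) :
    ((G.privatePatterns a u w)ᶜ.card : ℝ) =
      (Fintype.card α : ℝ) ^ G.degree w - ((Fintype.card α : ℝ) - 1) ^ (G.degree w - 1) := by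
  have hq : 1 ≤ Fintype.card α := Fintype.card_pos_iff.2 ⟨a⟩
  rw [card_compl, Nat.cast_sub (card_le_univ _), card_privatePatterns huw, Fintype.card_fun,
    card_neighborSet_eq_degree]
  push_cast [hq]
  rfl

open Classical in
lemma card_filter_not_hasPrivateMark_le {S X : Finset V} {u w : V} :
    ((G.goodPalettes κ a S X).filter fun g => ¬ G.HasPrivateMark a g u w).card ≤
      (G.privatePatterns a u w)ᶜ.card ^ Fintype.card κ *
        (G.goodPalettes κ a (S \ G.neighborFinset w) (X \ G.neighborFinset w)).card := by
  -- `g` is recovered from its patterns on `N(w)` and from `g` reset to `a` on `N(w)`.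
  calc _ ≤ ((Fintype.piFinset fun _ : κ => (G.privatePatterns a u w)ᶜ) ×ˢ
        G.goodPalettes κ a (S \ G.neighborFinset w) (X \ G.neighborFinset w)).card := by
        refine card_le_card_of_injOn
          (fun g => (fun γ x => g x γ, fun x => if G.Adj w x then fun _ => a else g x)) ?_ ?_
        · intro g hg
          simp only [coe_filter, mem_goodPalettes, Set.mem_ofPred_eq] at hg
          obtain ⟨⟨hS, hX⟩, hbad⟩ := hg
          simp only [coe_product, Set.mem_prod, mem_coe, Fintype.mem_piFinset, mem_compl,
            mem_goodPalettes, mem_sdiff, mem_neighborFinset, not_and, not_not]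
          refine ⟨fun γ hγ => hbad ⟨γ, isPrivateMark_iff_mem_privatePatterns.2 hγ⟩,
            fun x hx => ?_, fun u' w' huw' hw' => ?_⟩
          · split_ifs with hwx
            · rfl
            · exact hS x fun hxS => hwx (hx hxS)
          · have hdisj : ∀ x, G.Adj w' x → ¬ G.Adj w x := fun x hx =>
              (mem_sdiff.1 (hw' (by simpa using hx))).2 ∘ (mem_neighborFinset _ _ _).2
            refine (hasPrivateMark_congr fun x hx => ?_).1
              (hX huw' fun x hx => (mem_sdiff.1 (hw' hx)).1)
            simp [hdisj x hx]
        · intro g _ g' _ hgg'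
          simp only [Prod.mk.injEq] at hgg'
          funext x γ
          by_cases hwx : G.Adj w x
          · exact congrFun (congrFun hgg'.1 γ) ⟨x, hwx⟩
          · simpa [hwx] using congrFun (congrFun hgg'.2 x) γ
    _ = _ := by simp [card_product]

open Classical in
lemma card_filter_not_hasPrivateMark_le_mul {β ε : ℝ} (hβ : 0 ≤ β) (hε : 0 ≤ ε) {X : Finset V}
    (hgrow : ∀ Z ⊂ X, ∀ y ∉ Z,
      β * (G.goodPalettes κ a Z Z).card ≤ (G.goodPalettes κ a (insert y Z) (insert y Z)).card)
    {u v w : V} (hv : v ∉ X) (hvw : G.Adj v w) (huw : G.Adj u w)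
    (hw : G.neighborFinset w ⊆ insert v X)
    (hbad : ((Fintype.card α : ℝ) ^ G.degree w - (Fintype.card α - 1) ^ (G.degree w - 1)) ^
      Fintype.card κ ≤ ε * β ^ (G.degree w - 1)) :
    (((G.goodPalettes κ a (insert v X) X).filter fun g => ¬ G.HasPrivateMark a g u w).card : ℝ) ≤
      ε * (G.goodPalettes κ a X X).card := by
  set Y := X \ G.neighborFinset w
  have hvN : v ∈ G.neighborFinset w := by simpa using hvw.symm
  have hXY : (X \ Y).card = G.degree w - 1 := by
    have : X \ Y = (G.neighborFinset w).erase v := by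
      ext x
      simp only [Y, sdiff_sdiff_right_self, inf_eq_inter, mem_inter, mem_erase]
      constructor
      · rintro ⟨hxX, hxN⟩
        exact ⟨ne_of_mem_of_not_mem hxX hv, hxN⟩
      · rintro ⟨hxv, hxN⟩
        exact ⟨(mem_insert.1 (hw hxN)).resolve_left hxv, hxN⟩
    rw [this, card_erase_of_mem hvN, card_neighborFinset_eq_degree]
  have hchain := pow_card_sdiff_mul_le (f := fun Z => ((G.goodPalettes κ a Z Z).card : ℝ))
    (Y := Y) hβ sdiff_subset fun Z hZ y _ hy => hgrow Z hZ y hy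
  rw [hXY] at hchain
  have hcount := card_filter_not_hasPrivateMark_le (G := G) (κ := κ) (a := a)
    (S := insert v X) (X := X) (u := u) (w := w)
  rw [insert_sdiff_of_mem _ hvN] at hcount
  calc _ ≤ ((G.privatePatterns a u w)ᶜ.card : ℝ) ^ Fintype.card κ *
        (G.goodPalettes κ a Y Y).card := by
        exact_mod_cast hcount
    _ ≤ ε * β ^ (G.degree w - 1) * (G.goodPalettes κ a Y Y).card := by
        rw [card_compl_privatePatterns huw]
        gcongr
    _ ≤ ε * (G.goodPalettes κ a X X).card := by
        rw [mul_assoc]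
        gcongr

open Classical in
lemma sum_card_filter_not_hasPrivateMark_le {Δ : ℕ} {β ε : ℝ} (hmax : G.maxDegree ≤ Δ)
    (hβ : 0 ≤ β) (hε : 0 ≤ ε)
    (hbad : ∀ d, 1 ≤ d → d ≤ Δ →
      ((Fintype.card α : ℝ) ^ d - (Fintype.card α - 1) ^ (d - 1)) ^ Fintype.card κ ≤
        ε * β ^ (d - 1))
    {X : Finset V} (hgrow : ∀ Z ⊂ X, ∀ y ∉ Z,
      β * (G.goodPalettes κ a Z Z).card ≤ (G.goodPalettes κ a (insert y Z) (insert y Z)).card)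
    {v : V} (hv : v ∉ X) :
    ∑ w ∈ (G.neighborFinset v).filter (fun w => G.neighborFinset w ⊆ insert v X),
      ∑ u ∈ G.neighborFinset w,
        (((G.goodPalettes κ a (insert v X) X).filter fun g => ¬ G.HasPrivateMark a g u w).card : ℝ)
      ≤ Δ ^ 2 * ε * (G.goodPalettes κ a X X).card := by
  have hdeg (x : V) : (G.neighborFinset x).card ≤ Δ := by
    rw [card_neighborFinset_eq_degree]; exact (G.degree_le_maxDegree x).trans hmax
  calc _ ≤ ∑ w ∈ (G.neighborFinset v).filter (fun w => G.neighborFinset w ⊆ insert v X),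
        ∑ u ∈ G.neighborFinset w, ε * (G.goodPalettes κ a X X).card := by
        refine sum_le_sum fun w hw => sum_le_sum fun u hu => ?_
        simp only [mem_filter, mem_neighborFinset] at hw hu
        exact card_filter_not_hasPrivateMark_le_mul hβ hε hgrow hv hw.1 hu.symm hw.2
          (hbad _ ((G.degree_pos_iff_exists_adj w).2 ⟨u, hu⟩)
            ((G.degree_le_maxDegree w).trans hmax))
    _ ≤ ∑ w ∈ (G.neighborFinset v).filter (fun w => G.neighborFinset w ⊆ insert v X),
        Δ * (ε * (G.goodPalettes κ a X X).card) := by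
        refine sum_le_sum fun w _ => ?_
        rw [sum_const, nsmul_eq_mul]
        gcongr
        exact hdeg w
    _ ≤ Δ * (Δ * (ε * (G.goodPalettes κ a X X).card)) := by
        rw [sum_const, nsmul_eq_mul]
        gcongr
        exact (card_filter_le _ _).trans (hdeg v)
    _ = _ := by ring

theorem card_goodPalettes_insert_ge {Δ : ℕ} {β ε : ℝ} (hmax : G.maxDegree ≤ Δ) (hβ : 0 ≤ β)
    (hε : 0 ≤ ε) (hβε : β + Δ ^ 2 * ε ≤ (Fintype.card α : ℝ) ^ Fintype.card κ)
    (hbad : ∀ d, 1 ≤ d → d ≤ Δ →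
      ((Fintype.card α : ℝ) ^ d - (Fintype.card α - 1) ^ (d - 1)) ^ Fintype.card κ ≤
        ε * β ^ (d - 1))
    (X : Finset V) {v : V} (hv : v ∉ X) :
    β * (G.goodPalettes κ a X X).card ≤ (G.goodPalettes κ a (insert v X) (insert v X)).card := by
  classical
  induction X using Finset.strongInduction generalizing v with
  | H X ih =>
  have hcover : ((G.goodPalettes κ a (insert v X) X).card : ℝ) ≤
      (G.goodPalettes κ a (insert v X) (insert v X)).card +
        ∑ w ∈ (G.neighborFinset v).filter (fun w => G.neighborFinset w ⊆ insert v X),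
          ∑ u ∈ G.neighborFinset w,
            (((G.goodPalettes κ a (insert v X) X).filter
              fun g => ¬ G.HasPrivateMark a g u w).card : ℝ) := by
    exact_mod_cast card_goodPalettes_le_add_sum
  have hsum := sum_card_filter_not_hasPrivateMark_le hmax hβ hε hbad
    (fun Z hZ y hy => ih Z hZ hy) hv
  rw [card_goodPalettes_insert hv hv] at hcover
  push_cast at hcover
  calc β * (G.goodPalettes κ a X X).card
      ≤ ((Fintype.card α : ℝ) ^ Fintype.card κ - Δ ^ 2 * ε) * (G.goodPalettes κ a X X).card := by
        gcongr; linarith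
    _ ≤ _ := by linarith

end

theorem exists_forall_hasPrivateMark {Δ : ℕ} {β ε : ℝ} (hmax : G.maxDegree ≤ Δ) (hβ : 0 < β)
    (hε : 0 ≤ ε) (hβε : β + Δ ^ 2 * ε ≤ (Fintype.card α : ℝ) ^ Fintype.card κ)
    (hbad : ∀ d, 1 ≤ d → d ≤ Δ →
      ((Fintype.card α : ℝ) ^ d - (Fintype.card α - 1) ^ (d - 1)) ^ Fintype.card κ ≤
        ε * β ^ (d - 1)) :
    ∃ g : V → κ → α, ∀ ⦃u w⦄, G.Adj u w → G.HasPrivateMark a g u w := by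
  classical
  have hchain := pow_card_sdiff_mul_le (f := fun Z => ((G.goodPalettes κ a Z Z).card : ℝ)) hβ.le
    (empty_subset univ) fun Z _ _ _ hv => card_goodPalettes_insert_ge hmax hβ.le hε hβε hbad Z hv
  have hconst : (fun _ _ => a) ∈ G.goodPalettes κ a ∅ ∅ :=
    mem_goodPalettes.2 ⟨fun _ _ => rfl, isGoodOn_empty _⟩
  have hpos : (0 : ℝ) < (G.goodPalettes κ a univ univ).card :=
    (mul_pos (pow_pos hβ _) (by exact_mod_cast card_pos.2 ⟨_, hconst⟩)).trans_le hchain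
  obtain ⟨g, hg⟩ := card_pos.1 (by exact_mod_cast hpos)
  exact ⟨g, fun u w huw => (mem_goodPalettes.1 hg).2 huw (subset_univ _)⟩

end SimpleGraph

lemma IsBipartiteGraph.exists_isInjEdgeColoring {V α : Type*} {G : SimpleGraph V}
    (hbip : IsBipartiteGraph G) {a : α} {k : ℕ} [NeZero k] {g : V → Fin k → α}
    (hg : ∀ ⦃u w⦄, G.Adj u w → G.HasPrivateMark a g u w) :
    ∃ f : Sym2 V → Fin k, IsInjEdgeColoring G f := by
  obtain ⟨A, hA⟩ := hbip
  have horient : ∀ e ∈ G.edgeSet, ∃ u w, e = s(u, w) ∧ u ∈ A ∧ G.Adj u w := by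
    rintro ⟨u, w⟩ huw
    by_cases hu : u ∈ A
    · exact ⟨u, w, rfl, hu, huw⟩
    · exact ⟨w, u, Sym2.eq_swap, not_not.1 fun hw => hu ((hA huw).2 hw), huw.symm⟩
  have hcolor : ∀ e ∈ G.edgeSet, ∃ γ, ∃ u w, e = s(u, w) ∧ u ∈ A ∧ G.Adj u w ∧
      G.IsPrivateMark a g u w γ := by
    intro e he
    obtain ⟨u, w, rfl, hu, huw⟩ := horient e he
    obtain ⟨γ, hγ⟩ := hg huw
    exact ⟨γ, u, w, rfl, hu, huw, hγ⟩
  choose! f hf using hcolor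
  refine ⟨f, fun e₁ he₁ e₂ he₂ hconf hcol => ?_⟩
  obtain ⟨u₁, w₁, rfl, hu₁, huw₁, h₁⟩ := hf _ he₁
  obtain ⟨u₂, w₂, rfl, hu₂, huw₂, h₂⟩ := hf _ he₂
  rw [← hcol] at h₂
  have hw₁ := (hA huw₁).1 hu₁
  have hw₂ := (hA huw₂).1 hu₂
  rcases hconf.2 with ⟨hdisj, x, hx, y, hy, hxy⟩ | ⟨b, c, d, hbc, hcd, hbd, -⟩
  · simp only [Sym2.mem_iff] at hx hy hdisj
    rcases hx with rfl | rfl <;> rcases hy with rfl | rfl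
    · exact (hA hxy).1 hu₁ hu₂
    · exact hdisj x (Or.inl rfl) (Or.inl (h₁.eq_of_adj h₂ huw₁ hxy))
    · exact hdisj u₁ (Or.inl rfl) (Or.inl (h₂.eq_of_adj h₁ huw₂ hxy.symm).symm)
    · exact hw₁ ((hA hxy).2 hw₂)
  · have := hA hbc; have := hA hcd; have := hA hbd
    tauto

/-- If `G` is bipartite with maximum degree `Δ ≥ 2`, then `χ'_inj(G) ≤ ⌈27 Δ ln Δ⌉`. -/
theorem injChromIndex_le_of_bipartite {V : Type*} [Fintype V] (G : SimpleGraph V)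
    [DecidableRel G.Adj] (Δ : ℕ) (hΔ : G.maxDegree = Δ) (hΔ2 : 2 ≤ Δ)
    (hbip : IsBipartiteGraph G) :
    injChromIndex G ≤ ⌈(27 : ℝ) * Δ * Real.log Δ⌉₊ := by
  classical
  set C := ⌈(27 : ℝ) * Δ * Real.log Δ⌉₊
  have hΔ2' : (2 : ℝ) ≤ Δ := by exact_mod_cast hΔ2
  have hC : 27 * (Δ : ℝ) * Real.log Δ ≤ C := Nat.le_ceil _
  have : NeZero Δ := ⟨by omega⟩
  have : NeZero C := ⟨(Nat.ceil_pos.2 (by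
    have := Real.log_pos (by linarith : (1 : ℝ) < Δ); positivity)).ne'⟩
  have hβ : 0 < (1 - 1 / (2 * Δ)) * (Δ : ℝ) ^ C := by
    refine mul_pos ?_ (by positivity)
    rw [sub_pos, div_lt_one (by positivity)]
    linarith
  obtain ⟨g, hg⟩ := G.exists_forall_hasPrivateMark (κ := Fin C) (a := (0 : Fin Δ))
    (ε := Δ ^ C / (2 * Δ ^ 3)) hΔ.le hβ (by positivity)
    (le_of_eq (by simp only [Fintype.card_fin]; field_simp; ring))
    fun d hd hdΔ => by
      simpa [Fintype.card_fin] using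
        pow_sub_sub_one_pow_pow_le hΔ2' hd (by exact_mod_cast hdΔ) hC
  obtain ⟨f, hf⟩ := hbip.exists_isInjEdgeColoring hg
  exact Nat.sInf_le ⟨f, hf⟩
end

section
/- Let G be a finite simple graph, let Y be an independent set of vertices of G, and let X = V(G) ∖ Y. Let X₁ ⊆ X be any subset, let X₂ = { x ∈ X₁ : x has no neighbor in X₁ }, and let J be the set of all edges xy of G with x ∈ X₂ and y ∈ Y such that y has at most one neighbor in X₁. Then J is G-good, i.e., no two distinct edges of J are at distance exactly 1 in G or lie in a common triangle of G. -/
/-!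
Write an edge of `J` as `xy` with `x ∈ X₂`, `y ∈ Y`. Two such edges are never joined by an
`x`–`x'` edge (vertices of `X₂` have no neighbour in `X₁`) nor by a `y`–`y'` edge (`Y` is
independent). This rules out a common triangle, and leaves only a cross edge `x₁y₂` for edges at
distance one; but then `x₁` and `x₂` are both neighbours of `y₂` in `X₁`, so `x₁ = x₂` and the
two edges meet.
-/

open SimpleGraph

/-- A set `F` of edges is `G`-good if no two (distinct) edges in `F` conflict. -/
def GGood {V : Type*} (G : SimpleGraph V) (F : Set (Sym2 V)) : Prop :=
  ∀ e₁ ∈ F, ∀ e₂ ∈ F, ¬ EdgeConflict G e₁ e₂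

section

variable {V : Type*} {G : SimpleGraph V}

lemma isClique_triple {a b c : V} (hab : G.Adj a b) (hbc : G.Adj b c) (hac : G.Adj a c) :
    G.IsClique ({a, b, c} : Set V) := by
  simp only [isClique_insert, isClique_singleton, Set.mem_insert_iff, Set.mem_singleton_iff,
    forall_eq_or_imp, forall_eq]
  exact ⟨⟨trivial, fun _ => hbc⟩, fun _ => hab, fun _ => hac⟩

lemma mem_triple_of_mem_of_mem_triangle {a b c w : V} {e : Sym2 V}
    (he : e ∈ ({s(a, b), s(b, c), s(a, c)} : Set (Sym2 V))) (hw : w ∈ e) :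
    w ∈ ({a, b, c} : Set V) := by
  rcases he with rfl | rfl | rfl <;> aesop

lemma adj_of_mem_of_mem_triangle {a b c u v : V} {e₁ e₂ : Sym2 V}
    (hab : G.Adj a b) (hbc : G.Adj b c) (hac : G.Adj a c)
    (h₁ : e₁ ∈ ({s(a, b), s(b, c), s(a, c)} : Set (Sym2 V)))
    (h₂ : e₂ ∈ ({s(a, b), s(b, c), s(a, c)} : Set (Sym2 V)))
    (hu : u ∈ e₁) (hv : v ∈ e₂) (huv : u ≠ v) : G.Adj u v :=
  isClique_triple hab hbc hac (mem_triple_of_mem_of_mem_triangle h₁ hu)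
    (mem_triple_of_mem_of_mem_triangle h₂ hv) huv

lemma EdgeConflict.ne_and_cross_adj {x₁ y₁ x₂ y₂ : V}
    (h : EdgeConflict G s(x₁, y₁) s(x₂, y₂)) (hx : ¬ G.Adj x₁ x₂) (hy : ¬ G.Adj y₁ y₂) :
    x₁ ≠ x₂ ∧ (G.Adj x₁ y₂ ∨ G.Adj y₁ x₂) := by
  obtain ⟨hne, ⟨hdisj, u, hu, v, hv, huv⟩ | ⟨a, b, c, hab, hbc, hac, h₁, h₂⟩⟩ := h
  · refine ⟨fun hxx => hdisj x₁ (Sym2.mem_mk_left _ _) (hxx ▸ Sym2.mem_mk_left _ _), ?_⟩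
    rw [Sym2.mem_iff] at hu hv
    rcases hu with rfl | rfl <;> rcases hv with rfl | rfl <;> tauto
  · have hxx : x₁ = x₂ := by
      by_contra hxx
      exact hx (adj_of_mem_of_mem_triangle hab hbc hac h₁ h₂
        (Sym2.mem_mk_left _ _) (Sym2.mem_mk_left _ _) hxx)
    have hyy : y₁ ≠ y₂ := fun hyy => hne (by rw [hxx, hyy])
    exact (hy (adj_of_mem_of_mem_triangle hab hbc hac h₁ h₂
      (Sym2.mem_mk_right _ _) (Sym2.mem_mk_right _ _) hyy)).elim

end

theorem good_set_of_random_round_general {V : Type*} (G : SimpleGraph V)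
    (Y : Set V) (hY : ∀ u ∈ Y, ∀ v ∈ Y, ¬ G.Adj u v)
    (X₁ : Set V)
    (X₂ : Set V) (hX₂ : X₂ = {x ∈ X₁ | ∀ x' ∈ X₁, ¬ G.Adj x x'})
    (J : Set (Sym2 V))
    (hJ : J = {e | e ∈ G.edgeSet ∧ ∃ x y : V, e = s(x, y) ∧ x ∈ X₂ ∧ y ∈ Y ∧
      {x' ∈ X₁ | G.Adj y x'}.Subsingleton}) :
    GGood G J := by
  subst hX₂ hJ
  rintro _ ⟨he₁, x₁, y₁, rfl, ⟨hx₁, hx₁_iso⟩, hy₁, hsub₁⟩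
    _ ⟨he₂, x₂, y₂, rfl, ⟨hx₂, -⟩, hy₂, hsub₂⟩ hconf
  obtain ⟨hne, hcross | hcross⟩ :=
    hconf.ne_and_cross_adj (hx₁_iso x₂ hx₂) (hY y₁ hy₁ y₂ hy₂)
  · exact hne (hsub₂ ⟨hx₁, hcross.symm⟩ ⟨hx₂, he₂.symm⟩)
  · exact hne (hsub₁ ⟨hx₁, he₁.symm⟩ ⟨hx₂, hcross⟩)

/-- The set `J` produced by one round of the random procedure is `G`-good:
here `Y` is independent, `X₁ ⊆ V ∖ Y`, `X₂` consists of the vertices of `X₁` with no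
neighbor in `X₁`, and `J` consists of the edges `xy` with `x ∈ X₂`, `y ∈ Y` such that
`y` has at most one neighbor in `X₁`. -/
theorem good_set_of_random_round {V : Type*} (G : SimpleGraph V)
    (Y : Set V) (hY : ∀ u ∈ Y, ∀ v ∈ Y, ¬ G.Adj u v)
    (X₁ : Set V) (hX₁ : X₁ ⊆ Yᶜ)
    (X₂ : Set V) (hX₂ : X₂ = {x ∈ X₁ | ∀ x' ∈ X₁, ¬ G.Adj x x'})
    (J : Set (Sym2 V))
    (hJ : J = {e | e ∈ G.edgeSet ∧ ∃ x y : V, e = s(x, y) ∧ x ∈ X₂ ∧ y ∈ Y ∧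
      {x' ∈ X₁ | G.Adj y x'}.Subsingleton}) :
    GGood G J :=
  good_set_of_random_round_general G Y hY X₁ X₂ hX₂ J hJ
end

section
/- For every finite simple graph G, every G-good set of edges has size at most the independence number α(G); consequently, if G has at least one vertex, then χ'_inj(G) ≥ |E(G)|/α(G). -/
open SimpleGraph

/-- The independence number of `G`. -/
noncomputable def indepNum {V : Type*} (G : SimpleGraph V) : ℕ :=
  sSup {n : ℕ | ∃ s : Set V, n = s.ncard ∧ ∀ u ∈ s, ∀ v ∈ s, ¬ G.Adj u v}

/-! Each edge of a `G`-good set `F` has an endpoint lying on no other edge of `F`, since two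
further edges at both of its endpoints would conflict, through a common triangle or at
distance one. Picking such a leaf from every edge of `F` is injective, and no two leaves are
adjacent: an edge of `G` between endpoints of edges of `F` is itself in `F`. So the leaves form
an independent set of size `|F|`. The colour classes of an injective edge-colouring are
`G`-good, which gives `|E(G)| ≤ χ'_inj(G) α(G)`. -/

section

variable {V : Type*} {G : SimpleGraph V}

lemma edgeConflict_of_triangle {a b c : V} (hab : G.Adj a b) (hac : G.Adj a c)
    (hbc : G.Adj b c) : EdgeConflict G s(a, c) s(b, c) :=
  ⟨fun h => hab.ne (Sym2.congr_left.mp h),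
    Or.inr ⟨a, b, c, hab, hbc, hac, by simp, by simp⟩⟩

lemma edgeConflict_of_adj {u u' v v' : V} (huv : G.Adj u v) (huv' : u ≠ v') (hu'v : u' ≠ v)
    (hu'v' : u' ≠ v') : EdgeConflict G s(u, u') s(v, v') := by
  refine ⟨fun h => huv.ne ?_, Or.inl ⟨?_, u, Sym2.mem_mk_left u u', v, Sym2.mem_mk_left v v', huv⟩⟩
  · simpa [huv'] using congrArg (u ∈ ·) h
  · intro w hw
    rcases Sym2.mem_iff.mp hw with rfl | rfl <;> simp [huv.ne, *]

namespace GGood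

variable {F : Set (Sym2 V)}

lemma eq_or_eq_of_adj (hF : F ⊆ G.edgeSet) (hgood : GGood G F) {u u' v v' : V}
    (hu : s(u, u') ∈ F) (hv : s(v, v') ∈ F) (huv : G.Adj u v) : u' = v ∨ v' = u := by
  by_contra! ⟨hu'v, hv'u⟩
  by_cases hu'v' : u' = v'
  · subst hu'v'
    exact hgood _ hu _ hv (edgeConflict_of_triangle huv (hF hu) (hF hv))
  · exact hgood _ hu _ hv (edgeConflict_of_adj huv hv'u.symm hu'v hu'v')

lemma mk_mem_of_adj (hF : F ⊆ G.edgeSet) (hgood : GGood G F) {e₁ e₂ : Sym2 V} {u v : V}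
    (he₁ : e₁ ∈ F) (he₂ : e₂ ∈ F) (hu : u ∈ e₁) (hv : v ∈ e₂) (huv : G.Adj u v) :
    s(u, v) ∈ F := by
  rw [← Sym2.other_spec hu] at he₁
  rw [← Sym2.other_spec hv] at he₂
  rcases hgood.eq_or_eq_of_adj hF he₁ he₂ huv with h | h
  · rwa [h] at he₁
  · rwa [h, Sym2.eq_swap] at he₂

lemma exists_leaf (hF : F ⊆ G.edgeSet) (hgood : GGood G F) {e : Sym2 V} (he : e ∈ F) :
    ∃ v ∈ e, ∀ e' ∈ F, v ∈ e' → e' = e := by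
  induction e using Sym2.ind with | _ x y => ?_
  by_contra! h
  obtain ⟨e₁, he₁, hx, hne₁⟩ := h x (Sym2.mem_mk_left x y)
  obtain ⟨e₂, he₂, hy, hne₂⟩ := h y (Sym2.mem_mk_right x y)
  rw [← Sym2.other_spec hx] at he₁ hne₁
  rw [← Sym2.other_spec hy] at he₂ hne₂
  rcases hgood.eq_or_eq_of_adj hF he₁ he₂ (hF he) with h | h
  · exact hne₁ (by rw [h])
  · exact hne₂ (by rw [h, Sym2.eq_swap])

lemma exists_injective_isIndepSet (hF : F ⊆ G.edgeSet) (hgood : GGood G F) :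
    ∃ ℓ : F → V, Function.Injective ℓ ∧ G.IsIndepSet (Set.range ℓ) := by
  choose ℓ hℓ hleaf using fun e : F => hgood.exists_leaf hF e.2
  refine ⟨ℓ, fun e₁ e₂ h => Subtype.ext ?_, ?_⟩
  · exact hleaf e₂ e₁ e₁.2 (h ▸ hℓ e₁)
  · rintro _ ⟨e₁, rfl⟩ _ ⟨e₂, rfl⟩ hne hadj
    have he := hgood.mk_mem_of_adj hF e₁.2 e₂.2 (hℓ e₁) (hℓ e₂) hadj
    have h₁ := hleaf e₁ _ he (Sym2.mem_mk_left _ _)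
    have h₂ := hleaf e₂ _ he (Sym2.mem_mk_right _ _)
    exact hne (congrArg ℓ (Subtype.ext (h₁.symm.trans h₂)))

end GGood

lemma ncard_le_indepNum_of_isIndepSet [Finite V] {s : Set V} (hs : G.IsIndepSet s) :
    s.ncard ≤ _root_.indepNum G := by
  refine le_csSup ⟨Nat.card V, ?_⟩ ⟨s, rfl, fun u hu v hv hadj => hs hu hv hadj.ne hadj⟩
  rintro _ ⟨t, rfl, -⟩
  exact Set.ncard_le_card t

lemma GGood.ncard_le_indepNum [Finite V] {F : Set (Sym2 V)} (hF : F ⊆ G.edgeSet)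
    (hgood : GGood G F) : F.ncard ≤ _root_.indepNum G := by
  obtain ⟨ℓ, hinj, hindep⟩ := hgood.exists_injective_isIndepSet hF
  simpa [Set.ncard_range_of_injective hinj] using ncard_le_indepNum_of_isIndepSet hindep

lemma one_le_indepNum [Finite V] [Nonempty V] : 1 ≤ _root_.indepNum G := by
  obtain ⟨v⟩ := ‹Nonempty V›
  simpa using ncard_le_indepNum_of_isIndepSet (Set.pairwise_singleton v fun a b => ¬G.Adj a b)

lemma exists_isInjEdgeColoring_injChromIndex [Finite V] :
    ∃ f : Sym2 V → Fin (injChromIndex G), IsInjEdgeColoring G f := by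
  have : Fintype (Sym2 V) := Fintype.ofFinite _
  refine Nat.sInf_mem (s := {k | ∃ f : Sym2 V → Fin k, IsInjEdgeColoring G f})
    ⟨_, Fintype.equivFin (Sym2 V), ?_⟩
  exact fun e₁ _ e₂ _ hc h => hc.1 ((Fintype.equivFin _).injective h)

namespace IsInjEdgeColoring

variable {k : ℕ} {f : Sym2 V → Fin k}

lemma gGood_colorClass (hf : IsInjEdgeColoring G f) (c : Fin k) :
    GGood G {e ∈ G.edgeSet | f e = c} := by
  rintro e₁ ⟨he₁, rfl⟩ e₂ ⟨he₂, hc⟩ hconf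
  exact hf e₁ he₁ e₂ he₂ hconf hc.symm

lemma ncard_edgeSet_le [Finite V] (hf : IsInjEdgeColoring G f) :
    G.edgeSet.ncard ≤ k * _root_.indepNum G := by
  have hcover : G.edgeSet = ⋃ c, {e ∈ G.edgeSet | f e = c} := by
    ext e
    simp
  calc G.edgeSet.ncard = (⋃ c, {e ∈ G.edgeSet | f e = c}).ncard := congrArg Set.ncard hcover
    _ ≤ ∑ c, {e ∈ G.edgeSet | f e = c}.ncard := Set.ncard_iUnion_le_of_fintype _
    _ ≤ ∑ _c : Fin k, _root_.indepNum G :=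
        Finset.sum_le_sum fun c _ => (hf.gGood_colorClass c).ncard_le_indepNum fun _ h => h.1
    _ = k * _root_.indepNum G := by simp

end IsInjEdgeColoring

end

/-- Every `G`-good set of edges has size at most the independence number `α(G)`;
consequently, if `G` has a vertex, then `χ'_inj(G) ≥ |E(G)|/α(G)`. -/
theorem ggood_card_le_indepNum {V : Type*} [Fintype V] (G : SimpleGraph V) :
    (∀ F : Set (Sym2 V), F ⊆ G.edgeSet → GGood G F → F.ncard ≤ _root_.indepNum G) ∧
    (Nonempty V →
      (G.edgeSet.ncard : ℝ) / (_root_.indepNum G : ℝ) ≤ (injChromIndex G : ℝ)) := by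
  refine ⟨fun F hF hgood => hgood.ncard_le_indepNum hF, fun _ => ?_⟩
  obtain ⟨f, hf⟩ := exists_isInjEdgeColoring_injChromIndex (G := G)
  rw [div_le_iff₀ (by exact_mod_cast one_le_indepNum)]
  exact_mod_cast hf.ncard_edgeSet_le
end

section
/- For every integer Δ ≥ 3 and every integer g ≥ 3, there exists a Δ-regular bipartite finite simple graph G with girth at least g such that the injective chromatic index of G satisfies χ'_inj(G) ≥ Δ. -/
open SimpleGraph

/-!
Following Erdős and Sachs, take `G` edge-maximal among the bipartite graphs with sides `A`, `Aᶜ`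
of equal size, maximum degree at most `Δ` and girth at least `g`. It is `Δ`-regular: otherwise,
by the degree sums of the two sides, each side has a deficient vertex, `a₀ ∈ A` and `b₀ ∉ A`.
Deficient vertices on opposite sides are at distance `< g`, or they could be joined. Once there
are more vertices than two balls of radius `g` can hold, some vertex `y` lies at distance `> g`
from both `a₀` and `b₀`; it is not deficient, so it lies on an edge `pq` with `p ∈ A`. Replacing
`pq` by `pb₀` keeps the number of edges and all constraints, but turns `q` into a deficient vertex
at distance `≥ g` from `a₀`, a contradiction.

For the bound on the injective chromatic index, let `S` be a colour class in a triangle-free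
`Δ`-regular graph on `n` vertices. Every edge of `S` has an endpoint lying on no other edge of `S`,
and these endpoints form an independent set of size `|S|`, so `2|S| ≤ n`. Hence
`nΔ = 2|E| ≤ kn` for `k` colours.
-/

open Finset

lemma Finset.exists_lt_of_card_eq_of_sum_eq {ι : Type*} {s t : Finset ι} {f : ι → ℕ} {m : ℕ}
    (hst : #s = #t) (hsum : ∑ i ∈ s, f i = ∑ i ∈ t, f i) (hle : ∀ i ∈ t, f i ≤ m) {j : ι}
    (hj : j ∈ t) (hjm : f j < m) : ∃ i ∈ s, f i < m := by
  by_contra! h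
  have hs : #s • m ≤ ∑ i ∈ s, f i := card_nsmul_le_sum s f m h
  have ht : ∑ i ∈ t, f i < ∑ _i ∈ t, m := sum_lt_sum hle ⟨j, hj, hjm⟩
  rw [sum_const, smul_eq_mul] at ht
  rw [smul_eq_mul, hst] at hs
  omega

namespace SimpleGraph

variable {V : Type*} {G : SimpleGraph V} {a b p q : V}

lemma Walk.mem_edgeSet_of_notMem_edges_sup_edge {W : (G ⊔ edge p q).Walk a b}
    (hW : s(p, q) ∉ W.edges) {e : Sym2 V} (he : e ∈ W.edges) : e ∈ G.edgeSet := by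
  have := W.edges_subset_edgeSet he
  rw [edgeSet_sup] at this
  exact this.resolve_right fun h ↦ hW (Set.mem_singleton_iff.1 (edgeSet_edge_subset h) ▸ he)

lemma Walk.IsTrail.exists_split_sup_edge {W : (G ⊔ edge p q).Walk a b} (hW : W.IsTrail)
    (he : s(p, q) ∈ W.edges) : ∃ x y, s(x, y) = s(p, q) ∧
      ∃ (w₁ : G.Walk a x) (w₂ : G.Walk y b), w₁.length + 1 + w₂.length = W.length := by
  induction W with
  | nil => simp at he
  | @cons a c b hac W ih =>
    rw [Walk.isTrail_cons] at hW
    rw [Walk.edges_cons, List.mem_cons] at he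
    by_cases hfirst : s(a, c) = s(p, q)
    · refine ⟨a, c, hfirst, .nil, W.transfer G fun e ↦ ?_, by simp [add_comm]⟩
      exact Walk.mem_edgeSet_of_notMem_edges_sup_edge (hfirst ▸ hW.2)
    · obtain ⟨x, y, hxy, w₁, w₂, hlen⟩ := ih hW.1 (he.resolve_left (Ne.symm hfirst))
      have hadj : G.Adj a c := by
        rcases (sup_adj _ _ _ _).1 hac with h | h
        · exact h
        · exact absurd ((adj_edge _ _).1 h).1.symm hfirst
      exact ⟨x, y, hxy, .cons hadj w₁, w₂, by simp [← hlen]; omega⟩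

lemma le_egirth_sup_edge {n : ℕ∞} (hg : n ≤ G.egirth) (hpq : n ≤ G.edist p q + 1) :
    n ≤ (G ⊔ edge p q).egirth := by
  rw [le_egirth]
  intro a C hC
  by_cases he : s(p, q) ∈ C.edges
  · obtain ⟨x, y, hxy, w₁, w₂, hlen⟩ := hC.isTrail.exists_split_sup_edge he
    have hdist : G.edist p q = G.edist y x := by
      rcases Sym2.eq_iff.1 hxy with ⟨rfl, rfl⟩ | ⟨rfl, rfl⟩
      · exact edist_comm
      · rfl
    calc n ≤ G.edist y x + 1 := hdist ▸ hpq
      _ ≤ (w₂.append w₁).length + 1 := by gcongr; exact edist_le _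
      _ = C.length := by rw [← hlen, Walk.length_append]; push_cast; ring
  · have hC' := hC.transfer fun e ↦ Walk.mem_edgeSet_of_notMem_edges_sup_edge he
    simpa using le_egirth.1 hg a _ hC'

lemma le_edist_sup_edge {n : ℕ∞} (h₀ : n ≤ G.edist a b)
    (h₁ : ∀ x y, s(x, y) = s(p, q) → n ≤ G.edist a x + 1 + G.edist y b) :
    n ≤ (G ⊔ edge p q).edist a b := by
  classical
  by_cases htop : (G ⊔ edge p q).edist a b = ⊤
  · simp [htop]
  obtain ⟨W, hW⟩ := exists_walk_of_edist_ne_top htop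
  have hshort : (W.bypass.length : ℕ∞) ≤ (G ⊔ edge p q).edist a b := by
    rw [← hW]; exact_mod_cast W.length_bypass_le_length
  refine le_trans ?_ hshort
  by_cases he : s(p, q) ∈ W.bypass.edges
  · obtain ⟨x, y, hxy, w₁, w₂, hlen⟩ := W.bypass_isPath.isTrail.exists_split_sup_edge he
    calc n ≤ G.edist a x + 1 + G.edist y b := h₁ x y hxy
      _ ≤ w₁.length + 1 + w₂.length := by gcongr <;> exact edist_le _
      _ = W.bypass.length := by rw [← hlen]; push_cast; rfl
  · calc n ≤ G.edist a b := h₀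
      _ ≤ _ := edist_le (W.bypass.transfer G fun e ↦ Walk.mem_edgeSet_of_notMem_edges_sup_edge he)
      _ = W.bypass.length := by simp

lemma le_edist_deleteEdges_add_one {n : ℕ∞} (hg : n ≤ G.egirth) (hpq : G.Adj p q) :
    n ≤ (G.deleteEdges {s(p, q)}).edist p q + 1 := by
  classical
  by_cases htop : (G.deleteEdges {s(p, q)}).edist p q = ⊤
  · simp [htop]
  obtain ⟨W, hW⟩ := exists_walk_of_edist_ne_top htop
  have hsub : ∀ e ∈ W.bypass.edges, e ∈ G.edgeSet := fun e he ↦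
    edgeSet_mono (deleteEdges_le _) (W.bypass.edges_subset_edgeSet he)
  have hnotMem : s(q, p) ∉ (W.bypass.transfer G hsub).edges := by
    rw [Walk.edges_transfer]
    intro he
    simpa [Sym2.eq_swap] using W.bypass.edges_subset_edgeSet he
  have hcycle := (Walk.cons_isCycle_iff _ hpq.symm).2 ⟨W.bypass_isPath.transfer hsub, hnotMem⟩
  calc n ≤ (Walk.cons hpq.symm (W.bypass.transfer G hsub)).length := le_egirth.1 hg q _ hcycle
    _ ≤ W.length + 1 := by simpa using W.length_bypass_le_length
    _ = _ := by rw [hW]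

lemma exists_mem_ball_eq_or_adj {c v : V} {r : ℕ} (hv : v ∈ G.ball c (r + 2)) :
    ∃ u ∈ G.ball c (r + 1), u = v ∨ G.Adj u v := by
  rw [mem_ball] at hv
  obtain ⟨W, hW⟩ := exists_walk_of_edist_ne_top (ne_top_of_lt hv)
  rw [← hW] at hv
  cases W with
  | nil => exact ⟨c, by simp, .inl rfl⟩
  | cons hvu W =>
    refine ⟨_, ?_, .inr hvu.symm⟩
    have hlen : (Walk.cons hvu W).length < r + 2 := by exact_mod_cast hv
    rw [Walk.length_cons] at hlen
    exact lt_of_le_of_lt (edist_le W) (by exact_mod_cast Nat.lt_of_add_lt_add_right hlen)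

lemma ncard_ball_le [Finite V] {Δ : ℕ} (hdeg : ∀ v, (G.neighborSet v).ncard ≤ Δ) (c : V) (r : ℕ) :
    (G.ball c (r + 1)).ncard ≤ (Δ + 1) ^ r := by
  classical
  have := Fintype.ofFinite V
  induction r with
  | zero => simp
  | succ r ih =>
    have hsub : G.ball c (r + 1 + 1) ⊆
        ⋃ u ∈ (G.ball c (r + 1)).toFinset, insert u (G.neighborSet u) := by
      intro v hv
      obtain ⟨u, hu, huv⟩ := exists_mem_ball_eq_or_adj (by convert hv using 2; ring)
      exact Set.mem_biUnion (Set.mem_toFinset.2 hu) (Set.mem_insert_iff.2 (huv.imp Eq.symm id))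
    calc (G.ball c (r + 1 + 1)).ncard
        ≤ ∑ u ∈ (G.ball c (r + 1)).toFinset, (insert u (G.neighborSet u)).ncard :=
          (Set.ncard_le_ncard hsub).trans (Finset.set_ncard_biUnion_le _ _)
      _ ≤ ∑ _u ∈ (G.ball c (r + 1)).toFinset, (Δ + 1) :=
          Finset.sum_le_sum fun u _ ↦ (Set.ncard_insert_le _ _).trans (by gcongr; exact hdeg u)
      _ ≤ (Δ + 1) ^ (r + 1) := by
          rw [Finset.sum_const, smul_eq_mul, ← Set.ncard_eq_toFinset_card', pow_succ]
          gcongr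

lemma neighborSet_sup_edge_of_ne {v : V} (hva : v ≠ a) (hvb : v ≠ b) :
    (G ⊔ edge a b).neighborSet v = G.neighborSet v := by
  ext w
  simp [edge_adj, hva, hvb]

lemma ncard_neighborSet_sup_edge_le [Finite V] (v : V) :
    ((G ⊔ edge a b).neighborSet v).ncard ≤ (G.neighborSet v).ncard + 1 := by
  rw [neighborSet_sup]
  refine (Set.ncard_union_le _ _).trans (Nat.add_le_add_left ?_ _)
  refine (Set.ncard_le_one (Set.toFinite _)).2 fun x hx y hy ↦ ?_
  simp only [mem_neighborSet, edge_adj] at hx hy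
  grind

lemma ncard_neighborSet_deleteEdges_add_one [Finite V] (hpq : G.Adj p q) :
    ((G.deleteEdges {s(p, q)}).neighborSet p).ncard + 1 = (G.neighborSet p).ncard := by
  have : (G.deleteEdges {s(p, q)}).neighborSet p = G.neighborSet p \ {q} := by
    ext w
    simp only [mem_neighborSet, deleteEdges_adj, Set.mem_singleton_iff, Set.mem_sdiff]
    grind [Sym2.eq_iff, Adj.ne]
  rw [this]
  exact Set.ncard_sdiff_singleton_add_one hpq

lemma neighborSet_deleteEdges_subset (s : Set (Sym2 V)) (v : V) :
    (G.deleteEdges s).neighborSet v ⊆ G.neighborSet v :=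
  fun _ h ↦ deleteEdges_le s h

lemma ncard_edgeSet_sup_edge [Finite V] (hab : a ≠ b) (h : ¬G.Adj a b) :
    (G ⊔ edge a b).edgeSet.ncard = G.edgeSet.ncard + 1 := by
  rw [edgeSet_sup, edgeSet_edge_of_ne hab, Set.union_singleton]
  exact Set.ncard_insert_of_notMem h

lemma ncard_edgeSet_deleteEdges_add_one [Finite V] (hpq : G.Adj p q) :
    (G.deleteEdges {s(p, q)}).edgeSet.ncard + 1 = G.edgeSet.ncard := by
  rw [edgeSet_deleteEdges]
  exact Set.ncard_sdiff_singleton_add_one hpq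

lemma IsBipartiteWith.sup_edge {s t : Set V} (h : G.IsBipartiteWith s t) (ha : a ∈ s)
    (hb : b ∈ t) : (G ⊔ edge a b).IsBipartiteWith s t := by
  refine ⟨h.disjoint, fun v w hvw ↦ ?_⟩
  rcases hvw with hvw | hvw
  · exact h.mem_of_adj hvw
  · rcases ((edge_adj _ _ _ _).1 hvw).1 with ⟨rfl, rfl⟩ | ⟨rfl, rfl⟩
    · exact .inl ⟨ha, hb⟩
    · exact .inr ⟨hb, ha⟩

lemma IsBipartiteWith.anti {G' : SimpleGraph V} {s t : Set V} (h : G.IsBipartiteWith s t)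
    (hle : G' ≤ G) : G'.IsBipartiteWith s t :=
  ⟨h.disjoint, fun _ _ hvw ↦ h.mem_of_adj (hle hvw)⟩

lemma not_adj_of_two_le_edist {u v : V} (h : 2 ≤ G.edist u v) : ¬G.Adj u v := fun hadj ↦ by
  simp [edist_eq_one_iff_adj.2 hadj] at h

lemma le_edist_of_adj {n : ℕ∞} {x y c : V} (h : n + 1 ≤ G.edist y c) (hxy : G.Adj x y) :
    n ≤ G.edist x c := by
  have : n + 1 ≤ G.edist x c + 1 := by
    calc n + 1 ≤ G.edist y c := h
      _ ≤ G.edist y x + G.edist x c := G.edist_triangle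
      _ = G.edist x c + 1 := by rw [edist_eq_one_iff_adj.2 hxy.symm, add_comm]
  exact (ENat.add_le_add_iff_right ENat.one_ne_top).1 this

lemma ncard_neighborSet_eq_degree [Fintype V] [DecidableRel G.Adj] (v : V) :
    (G.neighborSet v).ncard = G.degree v := by
  rw [Set.ncard_eq_toFinset_card', ← card_neighborFinset_eq_degree, neighborFinset]

lemma two_mul_card_le_of_isIndepSet [Fintype V] [DecidableEq V] [DecidableRel G.Adj] {Δ : ℕ}
    (hreg : G.IsRegularOfDegree Δ) (hΔ : 0 < Δ) {s : Finset V} (hs : G.IsIndepSet s) :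
    2 * #s ≤ Fintype.card V := by
  have hcount : #s * Δ ≤ #sᶜ * Δ := by
    refine card_mul_le_card_mul G.Adj (fun a ha ↦ ?_) (fun b _ ↦ ?_)
    · rw [← hreg.degree_eq a, ← card_neighborFinset_eq_degree]
      refine card_le_card fun w hw ↦ ?_
      have hadj : G.Adj a w := (mem_neighborFinset _ _ _).1 hw
      refine mem_filter.2 ⟨mem_compl.2 fun hws ↦ ?_, hadj⟩
      exact hs (mem_coe.2 ha) (mem_coe.2 hws) hadj.ne hadj
    · rw [← hreg.degree_eq b, ← card_neighborFinset_eq_degree]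
      exact card_le_card fun a ha ↦ (mem_neighborFinset _ _ _).2 (mem_filter.1 ha).2.symm
  have := card_add_card_compl s
  have := Nat.le_of_mul_le_mul_right hcount hΔ
  omega

lemma exists_notMem_ball_of_ncard_neighborSet_le [Fintype V] {Δ g : ℕ}
    (hdeg : ∀ v, (G.neighborSet v).ncard ≤ Δ) (hV : 2 * (Δ + 1) ^ g < Fintype.card V) (a b : V) :
    ∃ y, y ∉ G.ball a (g + 1) ∧ y ∉ G.ball b (g + 1) := by
  by_contra! h
  have hcover : (Set.univ : Set V) ⊆ G.ball a (g + 1) ∪ G.ball b (g + 1) :=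
    fun y _ ↦ (em _).elim .inl fun hy ↦ .inr (h y hy)
  have := (Set.ncard_le_ncard hcover).trans (Set.ncard_union_le _ _)
  rw [Set.ncard_univ, Nat.card_eq_fintype_card] at this
  have := ncard_ball_le hdeg a g
  have := ncard_ball_le hdeg b g
  omega

section Extremal

variable [Fintype V] [DecidableEq V] {A : Finset V} {Δ g : ℕ}

variable (A Δ g) in
structure IsBoundedBipartite (G : SimpleGraph V) : Prop where
  isBipartiteWith : G.IsBipartiteWith A ↑Aᶜ
  ncard_neighborSet_le (v : V) : (G.neighborSet v).ncard ≤ Δ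
  le_egirth : (g : ℕ∞) ≤ G.egirth

variable (A Δ g) in
abbrev IsEdgeMaximalBoundedBipartite (G : SimpleGraph V) : Prop :=
  MaximalFor (IsBoundedBipartite A Δ g) (fun G ↦ G.edgeSet.ncard) G

lemma isBoundedBipartite_bot : IsBoundedBipartite A Δ g ⊥ where
  isBipartiteWith := ⟨disjoint_coe.2 disjoint_compl_right, by simp⟩
  ncard_neighborSet_le v := by simp
  le_egirth := by simp

lemma IsBoundedBipartite.deleteEdges (hG : IsBoundedBipartite A Δ g G) (s : Set (Sym2 V)) :
    IsBoundedBipartite A Δ g (G.deleteEdges s) where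
  isBipartiteWith := hG.isBipartiteWith.anti (deleteEdges_le s)
  ncard_neighborSet_le v :=
    (Set.ncard_le_ncard (neighborSet_deleteEdges_subset s v)).trans (hG.ncard_neighborSet_le v)
  le_egirth := hG.le_egirth.trans (egirth_anti (deleteEdges_le s))

lemma IsBoundedBipartite.sup_edge (hG : IsBoundedBipartite A Δ g G) (ha : a ∈ A) (hb : b ∉ A)
    (hda : (G.neighborSet a).ncard < Δ) (hdb : (G.neighborSet b).ncard < Δ)
    (hab : g ≤ G.edist a b + 1) : IsBoundedBipartite A Δ g (G ⊔ edge a b) where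
  isBipartiteWith := hG.isBipartiteWith.sup_edge ha (by simpa using hb)
  ncard_neighborSet_le v := by
    by_cases hv : v = a ∨ v = b
    · have := G.ncard_neighborSet_sup_edge_le (a := a) (b := b) v
      rcases hv with rfl | rfl <;> omega
    · rw [not_or] at hv
      rw [neighborSet_sup_edge_of_ne hv.1 hv.2]
      exact hG.ncard_neighborSet_le v
  le_egirth := le_egirth_sup_edge hG.le_egirth hab

lemma IsBoundedBipartite.exists_deficient (hG : IsBoundedBipartite A Δ g G) (hA : #A = #Aᶜ)
    {v : V} (hv : (G.neighborSet v).ncard < Δ) :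
    (∃ a ∈ A, (G.neighborSet a).ncard < Δ) ∧ (∃ b ∉ A, (G.neighborSet b).ncard < Δ) := by
  classical
  have hsum : ∑ v ∈ A, (G.neighborSet v).ncard = ∑ v ∈ Aᶜ, (G.neighborSet v).ncard := by
    simp_rw [ncard_neighborSet_eq_degree]
    exact isBipartiteWith_sum_degrees_eq hG.isBipartiteWith
  by_cases hvA : v ∈ A
  · obtain ⟨b, hb, hdb⟩ := exists_lt_of_card_eq_of_sum_eq hA.symm hsum.symm
      (fun v _ ↦ hG.ncard_neighborSet_le v) hvA hv
    exact ⟨⟨v, hvA, hv⟩, b, mem_compl.1 hb, hdb⟩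
  · obtain ⟨a, ha, hda⟩ := exists_lt_of_card_eq_of_sum_eq hA hsum
      (fun v _ ↦ hG.ncard_neighborSet_le v) (mem_compl.2 hvA) hv
    exact ⟨⟨a, ha, hda⟩, v, hvA, hv⟩

lemma IsEdgeMaximalBoundedBipartite.edist_lt (hmax : IsEdgeMaximalBoundedBipartite A Δ g G)
    (hg : 2 ≤ g) (ha : a ∈ A) (hb : b ∉ A) (hda : (G.neighborSet a).ncard < Δ)
    (hdb : (G.neighborSet b).ncard < Δ) : G.edist a b < g := by
  by_contra! hab
  have hcount := ncard_edgeSet_sup_edge (by rintro rfl; exact hb ha)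
    (not_adj_of_two_le_edist ((by exact_mod_cast hg : (2 : ℕ∞) ≤ g).trans hab))
  have : (G ⊔ edge a b).edgeSet.ncard ≤ G.edgeSet.ncard :=
    hmax.2 (hmax.1.sup_edge ha hb hda hdb (le_add_right hab)) (by dsimp only; omega)
  omega

/-- Exchanging `pq` for `pb₀` gives another edge-maximal graph, in which `q` is deficient and at
distance `≥ g` from `a₀`. -/
lemma IsEdgeMaximalBoundedBipartite.not_adj
    (hmax : IsEdgeMaximalBoundedBipartite A Δ g G) (hg : 2 ≤ g)
    {a₀ b₀ : V} (ha₀ : a₀ ∈ A) (hda₀ : (G.neighborSet a₀).ncard < Δ) (hb₀ : b₀ ∉ A)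
    (hdb₀ : (G.neighborSet b₀).ncard < Δ) (hp : p ∈ A)
    (hfar : ∀ v ∈ ({p, q} : Set V), g ≤ G.edist v a₀ ∧ g ≤ G.edist v b₀) : ¬G.Adj p q := by
  intro hpq
  have hG := hmax.1
  have hq : q ∉ A := by simpa using hG.isBipartiteWith.mem_of_mem_adj hp hpq
  have hne {u v : V} (h : (g : ℕ∞) ≤ G.edist u v) : u ≠ v := by
    rintro rfl
    simp only [edist_self, nonpos_iff_eq_zero, Nat.cast_eq_zero] at h
    omega
  obtain ⟨⟨hpa, hpb⟩, ⟨hqa, hqb⟩⟩ := And.intro (hfar p (by simp)) (hfar q (by simp))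
  have hdp := ncard_neighborSet_deleteEdges_add_one hpq
  have hdq := ncard_neighborSet_deleteEdges_add_one hpq.symm
  rw [Sym2.eq_swap] at hdq
  have hle₀ : G.deleteEdges {s(p, q)} ≤ G := deleteEdges_le _
  have hG₁ := (hG.deleteEdges {s(p, q)}).sup_edge hp hb₀
    (by have := hG.ncard_neighborSet_le p; omega)
    ((Set.ncard_le_ncard (neighborSet_deleteEdges_subset _ _)).trans_lt hdb₀)
    (le_add_right (hpb.trans (edist_anti hle₀)))
  set G₀ := G.deleteEdges {s(p, q)}
  set G₁ := G₀ ⊔ edge p b₀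
  have hcount : G₁.edgeSet.ncard = G.edgeSet.ncard := by
    have hnadj : ¬G₀.Adj p b₀ := fun h ↦ not_adj_of_two_le_edist
      ((by exact_mod_cast hg : (2 : ℕ∞) ≤ g).trans hpb) (hle₀ h)
    rw [ncard_edgeSet_sup_edge (hne hpb) hnadj, ncard_edgeSet_deleteEdges_add_one hpq]
  have hmax₁ : IsEdgeMaximalBoundedBipartite A Δ g G₁ :=
    ⟨hG₁, fun G' hG' hle ↦ by dsimp only at hle ⊢; rw [hcount] at hle ⊢; exact hmax.2 hG' hle⟩
  have hdist : (g : ℕ∞) ≤ G₁.edist a₀ q := by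
    refine le_edist_sup_edge ((edist_comm ▸ hqa).trans (edist_anti hle₀)) fun x y hxy ↦ ?_
    rcases Sym2.eq_iff.1 hxy with ⟨hx, hy⟩ | ⟨hx, hy⟩ <;> rw [hx, hy]
    · exact le_add_left ((edist_comm ▸ hqb).trans (edist_anti hle₀))
    · calc (g : ℕ∞) ≤ G₀.edist p q + 1 := le_edist_deleteEdges_add_one hG.le_egirth hpq
        _ ≤ _ := by rw [add_comm _ (1 : ℕ∞)]; gcongr; exact le_add_self
  refine (hmax₁.edist_lt hg ha₀ hq ?_ ?_).not_ge hdist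
  · rw [neighborSet_sup_edge_of_ne (hne hpa).symm (by rintro rfl; exact hb₀ ha₀)]
    exact (Set.ncard_le_ncard (neighborSet_deleteEdges_subset _ _)).trans_lt hda₀
  · rw [neighborSet_sup_edge_of_ne hpq.ne.symm (hne hqb)]
    have := hG.ncard_neighborSet_le q
    omega

lemma IsEdgeMaximalBoundedBipartite.ncard_neighborSet_eq
    (hmax : IsEdgeMaximalBoundedBipartite A Δ g G) (hA : #A = #Aᶜ)
    (hV : 2 * (Δ + 1) ^ g < Fintype.card V) (hg : 2 ≤ g) (v : V) :
    (G.neighborSet v).ncard = Δ := by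
  have hG := hmax.1
  refine (hG.ncard_neighborSet_le v).antisymm (not_lt.1 fun hv ↦ ?_)
  obtain ⟨⟨a₀, ha₀, hda₀⟩, b₀, hb₀, hdb₀⟩ := hG.exists_deficient hA hv
  obtain ⟨y, hya, hyb⟩ :=
    exists_notMem_ball_of_ncard_neighborSet_le hG.ncard_neighborSet_le hV a₀ b₀
  simp only [mem_ball, not_lt] at hya hyb
  by_cases hdy : (G.neighborSet y).ncard < Δ
  · by_cases hyA : y ∈ A
    · exact (hmax.edist_lt hg hyA hb₀ hdy hdb₀).not_ge (le_self_add.trans hyb)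
    · exact (hmax.edist_lt hg ha₀ hyA hda₀ hdy).not_ge
        (edist_comm ▸ le_self_add.trans hya)
  obtain ⟨x, hx⟩ : (G.neighborSet y).Nonempty := Set.nonempty_of_ncard_ne_zero (by omega)
  have hfar : ∀ w ∈ ({y, x} : Set V), g ≤ G.edist w a₀ ∧ g ≤ G.edist w b₀ := by
    rintro w (rfl | rfl)
    · exact ⟨le_self_add.trans hya, le_self_add.trans hyb⟩
    · exact ⟨le_edist_of_adj hya hx.symm, le_edist_of_adj hyb hx.symm⟩
  rcases hG.isBipartiteWith.mem_of_adj hx with ⟨hyA, -⟩ | ⟨-, hxA⟩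
  · exact hmax.not_adj hg ha₀ hda₀ hb₀ hdb₀ hyA hfar hx
  · exact hmax.not_adj hg ha₀ hda₀ hb₀ hdb₀ hxA (Set.pair_comm y x ▸ hfar) hx.symm

lemma exists_isBipartiteWith_ncard_neighborSet_eq_le_egirth (hA : #A = #Aᶜ)
    (hV : 2 * (Δ + 1) ^ g < Fintype.card V) (hg : 2 ≤ g) :
    ∃ G : SimpleGraph V, G.IsBipartiteWith A ↑Aᶜ ∧ (∀ v, (G.neighborSet v).ncard = Δ) ∧
      g ≤ G.egirth := by
  obtain ⟨G, hmax⟩ : ∃ G, IsEdgeMaximalBoundedBipartite A Δ g G :=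
    (Set.toFinite {G | IsBoundedBipartite A Δ g G}).exists_maximalFor _ _
      ⟨⊥, isBoundedBipartite_bot⟩
  exact ⟨G, hmax.1.isBipartiteWith, hmax.ncard_neighborSet_eq hA hV hg,
    hmax.1.le_egirth⟩

end Extremal

section InjectiveColoring

variable {k : ℕ} {f : Sym2 V → Fin k}

/-- The two edges must share an endpoint; as `G` has no triangle, one of them is `uv`. -/
lemma IsInjEdgeColoring.eq_or_eq_of_adj (hf : IsInjEdgeColoring G f) (hG : G.CliqueFree 3)
    {e₁ e₂ : Sym2 V} (he₁ : e₁ ∈ G.edgeSet) (he₂ : e₂ ∈ G.edgeSet) (hne : e₁ ≠ e₂)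
    (hfe : f e₁ = f e₂) {u v : V} (hu : u ∈ e₁) (hv : v ∈ e₂) (huv : G.Adj u v) :
    e₁ = s(u, v) ∨ e₂ = s(u, v) := by
  classical
  by_contra! h
  obtain ⟨a, rfl⟩ := Sym2.mem_iff_exists.1 hu
  obtain ⟨b, rfl⟩ := Sym2.mem_iff_exists.1 hv
  have hdisj : ∀ w ∈ s(u, a), w ∉ s(v, b) := by
    intro w hw hw'
    rcases Sym2.mem_iff.1 hw with rfl | rfl <;> rcases Sym2.mem_iff.1 hw' with rfl | rfl
    · exact huv.ne rfl
    · exact h.2 Sym2.eq_swap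
    · exact h.1 rfl
    · exact hG {u, v, w} (is3Clique_triple_iff.2 ⟨huv, he₁, he₂⟩)
  exact hf _ he₁ _ he₂ ⟨hne, .inl ⟨hdisj, u, hu, v, hv, huv⟩⟩ hfe

lemma IsInjEdgeColoring.exists_mem_forall_eq (hf : IsInjEdgeColoring G f) (hG : G.CliqueFree 3)
    {e : Sym2 V} (he : e ∈ G.edgeSet) :
    ∃ v ∈ e, ∀ e' ∈ G.edgeSet, f e' = f e → v ∈ e' → e' = e := by
  induction e with
  | h x y =>
  by_contra! hleaf
  obtain ⟨e₁, he₁, hf₁, hx₁, hne₁⟩ := hleaf x (Sym2.mem_mk_left x y)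
  obtain ⟨e₂, he₂, hf₂, hy₂, hne₂⟩ := hleaf y (Sym2.mem_mk_right x y)
  have hxy : x ≠ y := G.ne_of_adj he
  have h₁₂ : e₁ ≠ e₂ := by
    rintro rfl
    exact hne₁ ((Sym2.mem_and_mem_iff hxy).1 ⟨hx₁, hy₂⟩)
  rcases hf.eq_or_eq_of_adj hG he₁ he₂ h₁₂ (hf₁.trans hf₂.symm) hx₁ hy₂ he with h | h
  · exact hne₁ h
  · exact hne₂ h

lemma IsInjEdgeColoring.two_mul_card_filter_le [Fintype V] [DecidableEq V] [DecidableRel G.Adj]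
    {Δ : ℕ} (hf : IsInjEdgeColoring G f) (hG : G.CliqueFree 3) (hreg : G.IsRegularOfDegree Δ)
    (hΔ : 0 < Δ) (c : Fin k) : 2 * #{e ∈ G.edgeFinset | f e = c} ≤ Fintype.card V := by
  set S := {e ∈ G.edgeFinset | f e = c}
  have hS : ∀ e ∈ S, e ∈ G.edgeSet ∧ f e = c := fun e he ↦ by simpa [S] using he
  choose leaf hleaf_mem hleaf using fun e : S ↦ hf.exists_mem_forall_eq hG (hS e e.2).1
  have hunique (e e' : S) (h : leaf e ∈ (e' : Sym2 V)) : e' = e :=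
    Subtype.ext (hleaf e e' (hS e' e'.2).1 ((hS e' e'.2).2.trans (hS e e.2).2.symm) h)
  have hindep : G.IsIndepSet (univ.image leaf : Set V) := by
    simp only [coe_image, coe_univ, Set.image_univ]
    rintro _ ⟨e, rfl⟩ _ ⟨e', rfl⟩ hne hadj
    have hee' : (e : Sym2 V) ≠ e' := fun h ↦ hne (congrArg leaf (Subtype.ext h))
    rcases hf.eq_or_eq_of_adj hG (hS e e.2).1 (hS e' e'.2).1 hee'
        ((hS e e.2).2.trans (hS e' e'.2).2.symm) (hleaf_mem e) (hleaf_mem e') hadj with h | h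
    · exact hee' (congrArg _ (hunique e' e (h ▸ Sym2.mem_mk_right _ _)))
    · exact hee' (congrArg _ (hunique e e' (h ▸ Sym2.mem_mk_left _ _))).symm
  have hinj : Function.Injective leaf := fun e e' h ↦ (hunique e e' (h ▸ hleaf_mem e')).symm
  calc 2 * #S = 2 * #(univ.image leaf) := by rw [card_image_of_injective _ hinj, card_univ,
        Fintype.card_coe]
    _ ≤ Fintype.card V := two_mul_card_le_of_isIndepSet hreg hΔ hindep

theorem le_injChromIndex [Fintype V] [Nonempty V] [DecidableRel G.Adj] {Δ : ℕ}
    (hreg : G.IsRegularOfDegree Δ) (hG : G.CliqueFree 3) : Δ ≤ injChromIndex G := by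
  classical
  rcases Nat.eq_zero_or_pos Δ with rfl | hΔ
  · exact Nat.zero_le _
  have hcol : IsInjEdgeColoring G (Fintype.equivFin (Sym2 V)) := fun _ _ _ _ hc ↦
    (Fintype.equivFin _).injective.ne hc.1
  refine le_csInf ⟨_, _, hcol⟩ ?_
  rintro k ⟨f, hf⟩
  have hn : 0 < Fintype.card V := Fintype.card_pos
  refine Nat.le_of_mul_le_mul_right ?_ hn
  calc Δ * Fintype.card V = 2 * #G.edgeFinset := by
        rw [← sum_degrees_eq_twice_card_edges, sum_congr rfl fun v _ ↦ hreg.degree_eq v,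
          sum_const, card_univ, smul_eq_mul, mul_comm]
    _ = ∑ c : Fin k, 2 * #{e ∈ G.edgeFinset | f e = c} := by
        rw [card_eq_sum_card_fiberwise fun e _ ↦ mem_univ (f e), mul_sum]
    _ ≤ ∑ _c : Fin k, Fintype.card V := sum_le_sum fun c _ ↦ hf.two_mul_card_filter_le hG hreg hΔ c
    _ = k * Fintype.card V := by simp

end InjectiveColoring

end SimpleGraph

theorem exists_regular_bipartite_injChromIndex_ge_general (Δ g : ℕ) (hg : 3 ≤ g) :
    ∃ (n : ℕ) (G : SimpleGraph (Fin n)),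
      (∀ v, (G.neighborSet v).ncard = Δ) ∧
      IsBipartiteGraph G ∧
      (g : ℕ∞) ≤ G.egirth ∧
      Δ ≤ injChromIndex G := by
  classical
  set N := (Δ + 1) ^ g + 1
  let A : Finset (Fin (2 * N)) := {i | (i : ℕ) < N}
  have hA : #A = #Aᶜ := by rw [card_compl]; simp [A, Fin.card_filter_val_lt]; omega
  obtain ⟨G, hbip, hreg, hgirth⟩ := exists_isBipartiteWith_ncard_neighborSet_eq_le_egirth
    (Δ := Δ) (g := g) hA (by simp [N]) (by omega)
  have : Nonempty (Fin (2 * N)) := ⟨⟨0, by omega⟩⟩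
  refine ⟨2 * N, G, hreg, ⟨A, fun u v huv ↦ ?_⟩, hgirth, ?_⟩
  · rcases hbip.mem_of_adj huv with ⟨hu, hv⟩ | ⟨hu, hv⟩ <;> simp_all
  · refine le_injChromIndex (fun v ↦ ?_) (hbip.isBipartite.cliqueFree (by norm_num))
    rw [← ncard_neighborSet_eq_degree, hreg]

/-- Proposition 6: for every `Δ ≥ 3` and `g ≥ 3` there is a `Δ`-regular bipartite graph
with girth at least `g` whose injective chromatic index is at least `Δ`. -/
theorem exists_regular_bipartite_injChromIndex_ge (Δ g : ℕ) (hΔ : 3 ≤ Δ) (hg : 3 ≤ g) :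
    ∃ (n : ℕ) (G : SimpleGraph (Fin n)),
      (∀ v, (G.neighborSet v).ncard = Δ) ∧
      IsBipartiteGraph G ∧
      (g : ℕ∞) ≤ G.egirth ∧
      Δ ≤ injChromIndex G :=
  exists_regular_bipartite_injChromIndex_ge_general Δ g hg
end

section
/- Let H be a subcubic finite simple graph and let v be a vertex of H with degree at most 2. If H − v admits an injective edge-coloring with 7 colors, then H admits an injective edge-coloring with 7 colors. -/
/-!
Keep the colouring of `H - v` on the edges avoiding `v`: two such edges that conflict in `H`
already conflict in `H - v`, because the vertices of a witnessing triangle or connecting edge lie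
on the two edges themselves. Then colour the at most two edges at `v` greedily. An edge `vu`
conflicts only with edges `wx` at a neighbour `w ∉ {u, v}` of `v` (resp. `u`) with `x ≠ v`
(resp. `x ≠ u`); as `v` has at most one neighbour besides `u`, `u` at most two besides `v`, and
each such `w` at most two further edges, that is at most `2 + 4 = 6` edges, leaving one of the
seven colours free.
-/

open SimpleGraph

section InjectiveEdgeColoring

variable {V W : Type*} {G : SimpleGraph V} {k : ℕ}

theorem EdgeConflict.symm {e₁ e₂ : Sym2 V} (h : EdgeConflict G e₁ e₂) :
    EdgeConflict G e₂ e₁ := by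
  obtain ⟨hne, ⟨hdisj, x, hx, y, hy, hxy⟩ | ⟨a, b, c, hab, hbc, hac, h₁, h₂⟩⟩ := h
  · exact ⟨hne.symm, .inl
      ⟨fun z hz₂ hz₁ => hdisj z hz₁ hz₂, y, hy, x, hx, hxy.symm⟩⟩
  · exact ⟨hne.symm, .inr ⟨a, b, c, hab, hbc, hac, h₂, h₁⟩⟩

theorem SimpleGraph.exists_common_endpoint_of_mem_triangle {a b c : V} {e₁ e₂ : Sym2 V}
    (hab : G.Adj a b) (hbc : G.Adj b c) (hac : G.Adj a c)
    (h₁ : e₁ ∈ ({s(a, b), s(b, c), s(a, c)} : Set (Sym2 V)))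
    (h₂ : e₂ ∈ ({s(a, b), s(b, c), s(a, c)} : Set (Sym2 V))) (hne : e₁ ≠ e₂) :
    ∃ x y z, G.Adj x y ∧ G.Adj y z ∧ G.Adj x z ∧ e₁ = s(x, y) ∧ e₂ = s(x, z) := by
  rcases h₁ with rfl | rfl | rfl <;> rcases h₂ with rfl | rfl | rfl
  all_goals first
    | exact absurd rfl hne
    | exact ⟨a, b, c, hab, hbc, hac, rfl, rfl⟩
    | exact ⟨b, a, c, hab.symm, hac, hbc, Sym2.eq_swap, rfl⟩
    | exact ⟨a, c, b, hac, hbc.symm, hab, rfl, rfl⟩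
    | exact ⟨b, c, a, hbc, hac.symm, hab.symm, rfl, Sym2.eq_swap⟩
    | exact ⟨c, a, b, hac.symm, hab, hbc.symm, Sym2.eq_swap, Sym2.eq_swap⟩
    | exact ⟨c, b, a, hbc.symm, hab.symm, hac.symm, Sym2.eq_swap, Sym2.eq_swap⟩

theorem EdgeConflict.comap {φ : W → V} (hφ : Function.Injective φ) {e₁ e₂ : Sym2 W}
    (h : EdgeConflict G (e₁.map φ) (e₂.map φ)) : EdgeConflict (G.comap φ) e₁ e₂ := by
  obtain ⟨hne, ⟨hdisj, x, hx, y, hy, hxy⟩ | ⟨a, b, c, hab, hbc, hac, h₁, h₂⟩⟩ := h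
  · refine ⟨fun h => hne (h ▸ rfl), .inl ⟨fun z hz₁ hz₂ => ?_, ?_⟩⟩
    · exact hdisj (φ z) (Sym2.mem_map.2 ⟨z, hz₁, rfl⟩) (Sym2.mem_map.2 ⟨z, hz₂, rfl⟩)
    · obtain ⟨x', hx', rfl⟩ := Sym2.mem_map.1 hx
      obtain ⟨y', hy', rfl⟩ := Sym2.mem_map.1 hy
      exact ⟨x', hx', y', hy', hxy⟩
  · obtain ⟨x, y, z, hxy, hyz, hxz, he₁, he₂⟩ :=
      exists_common_endpoint_of_mem_triangle hab hbc hac h₁ h₂ hne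
    have mem_range {e : Sym2 W} {p : V} (h : p ∈ e.map φ) : ∃ p', φ p' = p :=
      (Sym2.mem_map.1 h).imp fun _ h => h.2
    obtain ⟨x, rfl⟩ := mem_range (he₁ ▸ Sym2.mem_mk_left _ _)
    obtain ⟨y, rfl⟩ := mem_range (he₁ ▸ Sym2.mem_mk_right _ _)
    obtain ⟨z, rfl⟩ := mem_range (he₂ ▸ Sym2.mem_mk_right _ _)
    have hmap := Sym2.map.injective hφ
    exact ⟨fun h => hne (h ▸ rfl),
      .inr ⟨x, y, z, hxy, hyz, hxz, .inl (hmap he₁), .inr (.inr (hmap he₂))⟩⟩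

def IsInjEdgeColoringOn (G : SimpleGraph V) (S : Set (Sym2 V)) (f : Sym2 V → Fin k) : Prop :=
  ∀ e₁ ∈ S, ∀ e₂ ∈ S, EdgeConflict G e₁ e₂ → f e₁ ≠ f e₂

theorem IsInjEdgeColoringOn.mono {S T : Set (Sym2 V)} {f : Sym2 V → Fin k}
    (hf : IsInjEdgeColoringOn G T f) (hST : S ⊆ T) : IsInjEdgeColoringOn G S f :=
  fun e₁ h₁ e₂ h₂ => hf e₁ (hST h₁) e₂ (hST h₂)

theorem IsInjEdgeColoringOn.exists_insert {S : Set (Sym2 V)} {f : Sym2 V → Fin k}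
    (hf : IsInjEdgeColoringOn G S f) {e : Sym2 V} {C : Finset (Sym2 V)} (hC : C.card < k)
    (hconf : ∀ e' ∈ S, EdgeConflict G e e' → e' ∈ C) :
    ∃ g : Sym2 V → Fin k, IsInjEdgeColoringOn G (insert e S) g := by
  classical
  obtain ⟨c, -, hc⟩ := Finset.exists_mem_notMem_of_card_lt_card
    (s := C.image f) (t := Finset.univ) (by simpa using Finset.card_image_le.trans_lt hC)
  have hfresh : ∀ e' ∈ S, EdgeConflict G e e' → c ≠ f e' :=
    fun e' he' hee' hce' => hc (hce' ▸ Finset.mem_image_of_mem f (hconf e' he' hee'))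
  refine ⟨Function.update f e c, ?_⟩
  intro e₁ h₁ e₂ h₂ h₁₂
  by_cases he₁ : e₁ = e
  · subst he₁
    rw [Function.update_self, Function.update_of_ne h₁₂.1.symm]
    exact hfresh e₂ (h₂.resolve_left h₁₂.1.symm) h₁₂
  by_cases he₂ : e₂ = e
  · subst he₂
    rw [Function.update_self, Function.update_of_ne he₁]
    exact (hfresh e₁ (h₁.resolve_left he₁) h₁₂.symm).symm
  rw [Function.update_of_ne he₁, Function.update_of_ne he₂]
  exact hf e₁ (h₁.resolve_left he₁) e₂ (h₂.resolve_left he₂) h₁₂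

theorem IsInjEdgeColoringOn.exists_union {S : Set (Sym2 V)} {f : Sym2 V → Fin k}
    (hf : IsInjEdgeColoringOn G S f) (T : Finset (Sym2 V))
    (hT : ∀ e ∈ T, ∃ C : Finset (Sym2 V), C.card < k ∧
      ∀ e' ∈ S ∪ T, EdgeConflict G e e' → e' ∈ C) :
    ∃ g : Sym2 V → Fin k, IsInjEdgeColoringOn G (S ∪ T) g := by
  classical
  induction T using Finset.induction_on with
  | empty => exact ⟨f, by simpa using hf⟩
  | insert e T _ ih =>
    have hsub : S ∪ T ⊆ S ∪ ↑(insert e T) := by gcongr; simp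
    obtain ⟨g, hg⟩ := ih fun e' he' => (hT e' (Finset.mem_insert_of_mem he')).imp
      fun C hC => ⟨hC.1, fun e'' h => hC.2 e'' (hsub h)⟩
    obtain ⟨C, hC, hconf⟩ := hT e (Finset.mem_insert_self e T)
    rw [Finset.coe_insert, Set.union_insert]
    exact hg.exists_insert hC fun e' he' => hconf e' (hsub he')

theorem IsInjEdgeColoring.isInjEdgeColoringOn_extend {φ : W → V} (hφ : Function.Injective φ)
    {f : Sym2 W → Fin k} (hf : IsInjEdgeColoring (G.comap φ) f) (g : Sym2 V → Fin k) :
    IsInjEdgeColoringOn G (Sym2.map φ '' (G.comap φ).edgeSet)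
      (Function.extend (Sym2.map φ) f g) := by
  rintro _ ⟨e₁, h₁, rfl⟩ _ ⟨e₂, h₂, rfl⟩ h₁₂
  rw [(Sym2.map.injective hφ).extend_apply, (Sym2.map.injective hφ).extend_apply]
  exact hf e₁ h₁ e₂ h₂ (h₁₂.comap hφ)

theorem SimpleGraph.edgeSet_eq_image_induce_compl_union_incidenceSet (v : V) :
    G.edgeSet = Sym2.map (↑) '' (G.induce ({v}ᶜ : Set V)).edgeSet ∪ G.incidenceSet v := by
  ext e
  refine ⟨fun he => ?_, ?_⟩
  · by_cases hv : v ∈ e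
    · exact .inr ⟨he, hv⟩
    have hs : ∀ x ∈ e, x ∈ ({v}ᶜ : Set V) := fun x hx hxv => hv (hxv ▸ hx)
    have hlift := Sym2.attachWith_map_subtypeVal hs
    refine .inl ⟨e.attachWith hs, (Embedding.induce _).map_mem_edgeSet_iff.1 ?_, hlift⟩
    convert he
    exact hlift
  · rintro (⟨e, he, rfl⟩ | ⟨he, -⟩)
    · exact (Embedding.induce _).map_mem_edgeSet_iff.2 he
    · exact he

def SimpleGraph.neighborEdges [DecidableEq V] (G : SimpleGraph V) [G.LocallyFinite] (v u : V) :
    Finset (Sym2 V) :=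
  ((G.neighborFinset v).erase u).biUnion fun w => (G.incidenceFinset w).erase s(v, w)

variable [DecidableEq V] [G.LocallyFinite]

theorem SimpleGraph.mem_neighborEdges {v u w : V} {e : Sym2 V} (hvw : G.Adj v w) (hwu : w ≠ u)
    (he : e ∈ G.edgeSet) (hwe : w ∈ e) (hve : v ∉ e) : e ∈ G.neighborEdges v u :=
  Finset.mem_biUnion.2 ⟨w, by simp [hvw, hwu], Finset.mem_erase.2
    ⟨fun h => hve (h ▸ Sym2.mem_mk_left v w), (G.mem_incidenceFinset w e).2 ⟨he, hwe⟩⟩⟩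

theorem SimpleGraph.card_neighborEdges_le {d : ℕ} (hd : ∀ w, G.degree w ≤ d) {v u : V}
    (huv : G.Adj v u) :
    (G.neighborEdges v u).card ≤ (G.degree v - 1) * (d - 1) := by
  have hw {w : V} (hw : w ∈ (G.neighborFinset v).erase u) :
      ((G.incidenceFinset w).erase s(v, w)).card ≤ d - 1 := by
    have hvw : s(v, w) ∈ G.incidenceFinset w :=
      (G.mem_incidenceFinset w _).2
        ⟨(G.mem_neighborFinset v w).1 (Finset.mem_of_mem_erase hw), Sym2.mem_mk_right v w⟩
    rw [Finset.card_erase_of_mem hvw, card_incidenceFinset_eq_degree]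
    exact Nat.sub_le_sub_right (hd w) 1
  calc (G.neighborEdges v u).card
      ≤ ∑ w ∈ (G.neighborFinset v).erase u, ((G.incidenceFinset w).erase s(v, w)).card :=
        Finset.card_biUnion_le
    _ ≤ ((G.neighborFinset v).erase u).card * (d - 1) := Finset.sum_le_card_nsmul _ _ _ @hw
    _ = (G.degree v - 1) * (d - 1) := by
        rw [Finset.card_erase_of_mem (by simpa using huv), card_neighborFinset_eq_degree]

theorem EdgeConflict.mem_neighborEdges_union {v u : V} {e : Sym2 V} (huv : G.Adj v u)
    (he : e ∈ G.edgeSet) (h : EdgeConflict G s(v, u) e) :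
    e ∈ G.neighborEdges v u ∪ G.neighborEdges u v := by
  obtain ⟨hne, ⟨hdisj, x, hx, y, hy, hxy⟩ | ⟨a, b, c, hab, hbc, hac, h₁, h₂⟩⟩ := h
  · have hve := hdisj v (Sym2.mem_mk_left v u)
    have hue := hdisj u (Sym2.mem_mk_right v u)
    rcases Sym2.mem_iff.1 hx with rfl | rfl
    · exact Finset.mem_union_left _ (mem_neighborEdges hxy (fun h => hue (h ▸ hy)) he hy hve)
    · exact Finset.mem_union_right _ (mem_neighborEdges hxy (fun h => hve (h ▸ hy)) he hy hue)
  · obtain ⟨x, y, z, -, hyz, hxz, hvu, rfl⟩ :=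
      exists_common_endpoint_of_mem_triangle hab hbc hac h₁ h₂ hne
    have hz : z ∈ s(x, z) := Sym2.mem_mk_right x z
    rcases Sym2.eq_iff.1 hvu with ⟨rfl, rfl⟩ | ⟨rfl, rfl⟩
    · refine Finset.mem_union_right _ (mem_neighborEdges hyz hxz.ne' he hz ?_)
      simp [Sym2.mem_iff, huv.ne', hyz.ne]
    · refine Finset.mem_union_left _ (mem_neighborEdges hyz hxz.ne' he hz ?_)
      simp [Sym2.mem_iff, huv.ne, hyz.ne]

theorem SimpleGraph.card_neighborEdges_union_le {v u : V} (hsub : ∀ w, G.degree w ≤ 3)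
    (hv : G.degree v ≤ 2) (huv : G.Adj v u) :
    (G.neighborEdges v u ∪ G.neighborEdges u v).card ≤ 6 := by
  have := card_neighborEdges_le hsub huv
  have := card_neighborEdges_le hsub huv.symm
  have := Finset.card_union_le (G.neighborEdges v u) (G.neighborEdges u v)
  have := hsub u
  omega

end InjectiveEdgeColoring

/-- Deleting a vertex of degree at most 2 from a subcubic graph: if `H - v` has an
injective edge-coloring with 7 colors, so does `H`. -/
theorem extend_coloring_low_degree_vertex {V : Type*} [Fintype V] (H : SimpleGraph V)
    [DecidableRel H.Adj] (hsub : ∀ u : V, H.degree u ≤ 3) (v : V) (hv : H.degree v ≤ 2)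
    (hcol : ∃ f : Sym2 (({v}ᶜ : Set V)) → Fin 7,
      IsInjEdgeColoring (H.induce ({v}ᶜ : Set V)) f) :
    ∃ f : Sym2 V → Fin 7, IsInjEdgeColoring H f := by
  classical
  obtain ⟨f, hf⟩ := hcol
  have hedges := H.edgeSet_eq_image_induce_compl_union_incidenceSet v
  rw [← coe_incidenceFinset] at hedges
  obtain ⟨g, hg⟩ := (hf.isInjEdgeColoringOn_extend Subtype.val_injective 0).exists_union
    (H.incidenceFinset v) fun e he => by
      obtain ⟨huv, u, rfl⟩ :=
        (H.mem_incidenceFinset v e).1 he |>.imp_right Sym2.mem_iff_exists.1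
      exact ⟨_, (card_neighborEdges_union_le hsub hv huv).trans_lt (by norm_num),
        fun e' he' h => h.mem_neighborEdges_union huv (hedges.ge he')⟩
  exact ⟨g, hg.mono hedges.le⟩
end
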